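/- arXiv:math/0610484 — 14 statements merged into one kernel-verified Lean document; each statement's English description precedes it below -/
import Mathlib

section
/- Let R be an associative ring with identity, not necessarily commutative, and let S = [[A, B], [C, D]] be a 2×2 matrix with entries in R. If B, D, and Δ = B⁻¹A − D⁻¹C are units of R, then S is invertible in the ring of 2×2 matrices over R, and its inverse is S⁻¹ = [[Δ⁻¹B⁻¹, −Δ⁻¹D⁻¹], [−D⁻¹CΔ⁻¹B⁻¹, B⁻¹AΔ⁻¹D⁻¹]]. -/
/-- If `B`, `D` and `Δ = B⁻¹A − D⁻¹C` are units of an associative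
(possibly noncommutative) unital ring `R`, then `S = [[A,B],[C,D]]` is invertible
in the ring of 2×2 matrices over `R`, with the indicated two-sided inverse. -/
theorem stmt_0 {R : Type*} [Ring R] (A B C D : R)
    (hB : IsUnit B) (hD : IsUnit D)
    (Δ : R) (hΔdef : Δ = Ring.inverse B * A - Ring.inverse D * C) (hΔ : IsUnit Δ) :
    IsUnit (!![A, B; C, D] : Matrix (Fin 2) (Fin 2) R) ∧
    !![A, B; C, D] *
      !![Ring.inverse Δ * Ring.inverse B, -(Ring.inverse Δ * Ring.inverse D);
         -(Ring.inverse D * C * Ring.inverse Δ * Ring.inverse B),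
         Ring.inverse B * A * Ring.inverse Δ * Ring.inverse D] = 1 ∧
    !![Ring.inverse Δ * Ring.inverse B, -(Ring.inverse Δ * Ring.inverse D);
       -(Ring.inverse D * C * Ring.inverse Δ * Ring.inverse B),
       Ring.inverse B * A * Ring.inverse Δ * Ring.inverse D] *
      !![A, B; C, D] = 1 := by
  set b := Ring.inverse B with hb
  set d := Ring.inverse D with hd
  set δ := Ring.inverse Δ with hδ
  have hBb : B * b = 1 := Ring.mul_inverse_cancel B hB
  have hbB : b * B = 1 := Ring.inverse_mul_cancel B hB
  have hDd : D * d = 1 := Ring.mul_inverse_cancel D hD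
  have hdD : d * D = 1 := Ring.inverse_mul_cancel D hD
  have hΔδ : Δ * δ = 1 := Ring.mul_inverse_cancel Δ hΔ
  have hδΔ : δ * Δ = 1 := Ring.inverse_mul_cancel Δ hΔ
  have hbA : b * A = Δ + d * C := by rw [hΔdef]; noncomm_ring
  have key : A - B * (d * C) = B * Δ := by
    rw [hΔdef, mul_sub, ← mul_assoc B b A, hBb, one_mul]
  have key2 : D * (b * A) - C = D * Δ := by
    rw [hbA, mul_add, ← mul_assoc, hDd, one_mul, add_sub_cancel_right]
  have h1 : !![A, B; C, D] *
      !![δ * b, -(δ * d); -(d * C * δ * b), b * A * δ * d] = 1 := by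
    ext i j
    fin_cases i <;> fin_cases j <;>
      simp [Matrix.mul_apply, Fin.sum_univ_two, Matrix.one_apply]
    · calc A * (δ * b) + -(B * (d * C * δ * b))
          = (A - B * (d * C)) * (δ * b) := by noncomm_ring
        _ = B * (Δ * δ) * b := by rw [key]; noncomm_ring
        _ = 1 := by rw [hΔδ, mul_one, hBb]
    · calc -(A * (δ * d)) + B * (b * A * δ * d)
          = (B * b) * (A * (δ * d)) - A * (δ * d) := by noncomm_ring
        _ = 0 := by rw [hBb, one_mul, sub_self]
    · calc C * (δ * b) + -(D * (d * C * δ * b))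
          = C * (δ * b) - (D * d) * (C * (δ * b)) := by noncomm_ring
        _ = 0 := by rw [hDd, one_mul, sub_self]
    · calc -(C * (δ * d)) + D * (b * A * δ * d)
          = (D * (b * A) - C) * (δ * d) := by noncomm_ring
        _ = D * (Δ * δ) * d := by rw [key2]; noncomm_ring
        _ = 1 := by rw [hΔδ, mul_one, hDd]
  have h2 : !![δ * b, -(δ * d); -(d * C * δ * b), b * A * δ * d] *
      !![A, B; C, D] = 1 := by
    ext i j
    fin_cases i <;> fin_cases j <;>
      simp [Matrix.mul_apply, Fin.sum_univ_two, Matrix.one_apply]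
    · calc δ * b * A + -(δ * d * C)
          = δ * (b * A - d * C) := by noncomm_ring
        _ = 1 := by rw [← hΔdef, hδΔ]
    · calc δ * b * B + -(δ * d * D)
          = δ * (b * B) - δ * (d * D) := by noncomm_ring
        _ = 0 := by rw [hbB, hdD, sub_self]
    · calc -(d * C * δ * b * A) + b * A * δ * d * C
          = (b * A) * (δ * (d * C)) - (d * C) * (δ * (b * A)) := by noncomm_ring
        _ = (Δ + d * C) * (δ * (d * C)) - (d * C) * (δ * (Δ + d * C)) := by rw [hbA]
        _ = (Δ * δ) * (d * C) - (d * C) * (δ * Δ) := by noncomm_ring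
        _ = 0 := by rw [hΔδ, hδΔ, one_mul, mul_one, sub_self]
    · calc -(d * C * δ * b * B) + b * A * δ * d * D
          = (b * A) * δ * (d * D) - (d * C) * δ * (b * B) := by noncomm_ring
        _ = (b * A - d * C) * δ := by rw [hdD, hbB, mul_one, mul_one]; noncomm_ring
        _ = 1 := by rw [← hΔdef, hΔδ]
  exact ⟨⟨⟨_, _, h1, h2⟩, rfl⟩, h1, h2⟩
end

section
/- Let R be an associative ring with identity, not necessarily commutative, and let S = [[A, B], [C, D]] be a 2×2 matrix with entries in R. If A, C, and Δ′ = C⁻¹D − A⁻¹B are units of R, then S is invertible in the ring of 2×2 matrices over R, and its inverse is S⁻¹ = [[C⁻¹DΔ′⁻¹A⁻¹, −A⁻¹BΔ′⁻¹C⁻¹], [−Δ′⁻¹A⁻¹, Δ′⁻¹C⁻¹]]. -/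
/-- If `A`, `C` and `Δ′ = C⁻¹D − A⁻¹B` are units of an associative
(possibly noncommutative) unital ring `R`, then `S = [[A,B],[C,D]]` is invertible
in the ring of 2×2 matrices over `R`, with the indicated two-sided inverse. -/
theorem stmt_1 {R : Type*} [Ring R] (A B C D : R)
    (hA : IsUnit A) (hC : IsUnit C)
    (Δ' : R) (hΔ'def : Δ' = Ring.inverse C * D - Ring.inverse A * B) (hΔ' : IsUnit Δ') :
    IsUnit (!![A, B; C, D] : Matrix (Fin 2) (Fin 2) R) ∧
    !![A, B; C, D] *
      !![Ring.inverse C * D * Ring.inverse Δ' * Ring.inverse A,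
         -(Ring.inverse A * B * Ring.inverse Δ' * Ring.inverse C);
         -(Ring.inverse Δ' * Ring.inverse A), Ring.inverse Δ' * Ring.inverse C] = 1 ∧
    !![Ring.inverse C * D * Ring.inverse Δ' * Ring.inverse A,
       -(Ring.inverse A * B * Ring.inverse Δ' * Ring.inverse C);
       -(Ring.inverse Δ' * Ring.inverse A), Ring.inverse Δ' * Ring.inverse C] *
      !![A, B; C, D] = 1 := by
  set a := Ring.inverse A with ha
  set c := Ring.inverse C with hc
  set d := Ring.inverse Δ' with hd
  have haA : a * A = 1 := Ring.inverse_mul_cancel _ hA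
  have hAa : A * a = 1 := Ring.mul_inverse_cancel _ hA
  have hcC : c * C = 1 := Ring.inverse_mul_cancel _ hC
  have hCc : C * c = 1 := Ring.mul_inverse_cancel _ hC
  have hdΔ : d * Δ' = 1 := Ring.inverse_mul_cancel _ hΔ'
  have hΔd : Δ' * d = 1 := Ring.mul_inverse_cancel _ hΔ'
  have hB : A * (a * B) = B := by rw [← mul_assoc, hAa, one_mul]
  have hD : C * (c * D) = D := by rw [← mul_assoc, hCc, one_mul]
  have hAΔ : A * Δ' = A * (c * D) - B := by rw [hΔ'def, mul_sub, hB]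
  have hCΔ : C * Δ' = D - C * (a * B) := by rw [hΔ'def, mul_sub, hD]
  -- entries of S * T
  have g11 : A * (c * D * d * a) + -(B * (d * a)) = 1 := by
    calc A * (c * D * d * a) + -(B * (d * a)) = (A * (c * D) - B) * (d * a) := by noncomm_ring
      _ = A * (Δ' * d) * a := by rw [← hAΔ]; noncomm_ring
      _ = 1 := by rw [hΔd, mul_one, hAa]
  have g12 : -(A * (a * B * d * c)) + B * (d * c) = 0 := by
    calc -(A * (a * B * d * c)) + B * (d * c)
        = -(A * (a * B) * (d * c)) + B * (d * c) := by noncomm_ring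
      _ = 0 := by rw [hB]; exact neg_add_cancel _
  have g21 : C * (c * D * d * a) + -(D * (d * a)) = 0 := by
    calc C * (c * D * d * a) + -(D * (d * a))
        = C * (c * D) * (d * a) - D * (d * a) := by noncomm_ring
      _ = 0 := by rw [hD, sub_self]
  have g22 : -(C * (a * B * d * c)) + D * (d * c) = 1 := by
    calc -(C * (a * B * d * c)) + D * (d * c) = (D - C * (a * B)) * (d * c) := by noncomm_ring
      _ = C * (Δ' * d) * c := by rw [← hCΔ]; noncomm_ring
      _ = 1 := by rw [hΔd, mul_one, hCc]
  -- entries of T * S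
  have f11 : c * D * d * a * A + -(a * B * d * c * C) = 1 := by
    calc c * D * d * a * A + -(a * B * d * c * C)
        = c * D * (d * (a * A)) - a * B * (d * (c * C)) := by noncomm_ring
      _ = (c * D - a * B) * d := by rw [haA, hcC]; noncomm_ring
      _ = 1 := by rw [← hΔ'def, hΔd]
  have f12 : c * D * d * a * B + -(a * B * d * c * D) = 0 := by
    have hsub1 : c * D * d - a * B * d = 1 := by rw [← sub_mul, ← hΔ'def, hΔd]
    have h1 : c * D * d = 1 + a * B * d := sub_eq_iff_eq_add.mp hsub1
    have hsub2 : d * (c * D) - d * (a * B) = 1 := by rw [← mul_sub, ← hΔ'def, hdΔ]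
    have h2 : d * (c * D) = 1 + d * (a * B) := sub_eq_iff_eq_add.mp hsub2
    calc c * D * d * a * B + -(a * B * d * c * D)
        = (c * D * d) * (a * B) - a * B * (d * (c * D)) := by noncomm_ring
      _ = (1 + a * B * d) * (a * B) - a * B * (1 + d * (a * B)) := by rw [h1, h2]
      _ = 0 := by noncomm_ring
  have f21 : -(d * a * A) + d * c * C = 0 := by
    calc -(d * a * A) + d * c * C = -(d * (a * A)) + d * (c * C) := by noncomm_ring
      _ = 0 := by rw [haA, hcC, mul_one]; exact neg_add_cancel _
  have f22 : -(d * a * B) + d * c * D = 1 := by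
    calc -(d * a * B) + d * c * D = d * (c * D - a * B) := by noncomm_ring
      _ = 1 := by rw [← hΔ'def, hdΔ]
  have hST : !![A, B; C, D] *
      !![c * D * d * a, -(a * B * d * c); -(d * a), d * c] = 1 := by
    ext i j
    fin_cases i <;> fin_cases j <;>
      simp [Matrix.mul_apply, Fin.sum_univ_two, g11, g12, g21, g22]
  have hTS : !![c * D * d * a, -(a * B * d * c); -(d * a), d * c] *
      !![A, B; C, D] = 1 := by
    ext i j
    fin_cases i <;> fin_cases j <;>
      simp [Matrix.mul_apply, Fin.sum_univ_two, f11, f12, f21, f22]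
  exact ⟨⟨⟨_, _, hST, hTS⟩, rfl⟩, hST, hTS⟩
end

section
/- Let R be an associative ring with identity, not necessarily commutative, and let A, B, C, D ∈ R. Form the 3×3 matrices S×id = [[A, B, 0], [C, D, 0], [0, 0, 1]] and id×S = [[1, 0, 0], [0, A, B], [0, C, D]] over R. Then the Yang–Baxter matrix equation (S×id)(id×S)(S×id) = (id×S)(S×id)(id×S) holds if and only if the following seven equations hold: (1) A = A² + BAC; (2) BA − AB = BAD; (3) CD − DC = CDA; (4) D = D² + CDB; (5) AC − CA = DAC; (6) DB − BD = ADB; (7) CB − BC = ADA − DAD. -/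
/-- Over an associative (possibly noncommutative) unital ring `R`, the
Yang–Baxter matrix equation `(S×id)(id×S)(S×id) = (id×S)(S×id)(id×S)` for the 3×3
matrices built from `S = [[A,B],[C,D]]` holds if and only if the seven Yang–Baxter
equations hold. -/
theorem stmt_3 {R : Type*} [Ring R] (A B C D : R) :
    (!![A, B, 0; C, D, 0; 0, 0, 1] : Matrix (Fin 3) (Fin 3) R) *
        !![1, 0, 0; 0, A, B; 0, C, D] * !![A, B, 0; C, D, 0; 0, 0, 1] =
      !![1, 0, 0; 0, A, B; 0, C, D] * !![A, B, 0; C, D, 0; 0, 0, 1] *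
        !![1, 0, 0; 0, A, B; 0, C, D] ↔
    (A = A * A + B * A * C ∧
     B * A - A * B = B * A * D ∧
     C * D - D * C = C * D * A ∧
     D = D * D + C * D * B ∧
     A * C - C * A = D * A * C ∧
     D * B - B * D = A * D * B ∧
     C * B - B * C = A * D * A - D * A * D) := by

  rw [show (!![A, B, 0; C, D, 0; 0, 0, 1] : Matrix (Fin 3) (Fin 3) R) *
        !![1, 0, 0; 0, A, B; 0, C, D] * !![A, B, 0; C, D, 0; 0, 0, 1] =
      !![A*A+B*A*C, A*B+B*A*D, B*B;
         C*A+D*A*C, C*B+D*A*D, D*B;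
         C*C, C*D, D] from by
      simp [Matrix.mul_fin_three],
    show (!![1, 0, 0; 0, A, B; 0, C, D] : Matrix (Fin 3) (Fin 3) R) *
        !![A, B, 0; C, D, 0; 0, 0, 1] * !![1, 0, 0; 0, A, B; 0, C, D] =
      !![A, B*A, B*B;
         A*C, A*D*A+B*C, A*D*B+B*D;
         C*C, C*D*A+D*C, C*D*B+D*D] from by
      simp [Matrix.mul_fin_three],
    ← Matrix.ext_iff]
  simp [Fin.forall_fin_succ]
  constructor
  · rintro ⟨⟨h1, h2⟩, ⟨h5, h7, h6⟩, h3, h4⟩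
    exact ⟨h1.symm, by rw [sub_eq_iff_eq_add']; exact h2.symm,
      by rw [sub_eq_iff_eq_add]; exact h3,
      by rw [add_comm] at h4; exact h4,
      by rw [sub_eq_iff_eq_add']; exact h5.symm,
      by rw [sub_eq_iff_eq_add]; exact h6,
      by rw [sub_eq_sub_iff_add_eq_add]; exact h7⟩
  · rintro ⟨h1, h2, h3, h4, h5, h6, h7⟩
    rw [sub_eq_iff_eq_add'] at h2 h5
    rw [sub_eq_iff_eq_add] at h3 h6
    rw [sub_eq_sub_iff_add_eq_add] at h7
    exact ⟨⟨h1.symm, h2.symm⟩, ⟨h5.symm, h7, h6⟩,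
      h3, by rw [add_comm] at h4; exact h4⟩
end

section
/- Let R be an associative ring with identity, not necessarily commutative, let A, B, C, D ∈ R with A, B, C units, and assume the equations A = A² + BAC and BA − AB = BAD hold. Then C = A⁻¹B⁻¹A(1 − A), D = 1 − A⁻¹B⁻¹AB, and both 1 − A and 1 − D are units of R. -/
/-- In an associative (possibly noncommutative) unital ring, if `A, B, C`
are units and the first two Yang–Baxter equations hold, then
`C = A⁻¹B⁻¹A(1−A)`, `D = 1 − A⁻¹B⁻¹AB`, and `1 − A`, `1 − D` are units. -/
theorem stmt_4 {R : Type*} [Ring R] (A B C D : R)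
    (hA : IsUnit A) (hB : IsUnit B) (hC : IsUnit C)
    (h1 : A = A * A + B * A * C)
    (h2 : B * A - A * B = B * A * D) :
    C = Ring.inverse A * Ring.inverse B * A * (1 - A) ∧
    D = 1 - Ring.inverse A * Ring.inverse B * A * B ∧
    IsUnit (1 - A) ∧ IsUnit (1 - D) := by
  have hBAC : B * A * C = A - A * A := eq_sub_of_add_eq' h1.symm
  have cancel : ∀ x : R, Ring.inverse A * Ring.inverse B * (B * A * x) = x := by
    intro x
    rw [mul_assoc (Ring.inverse A), mul_assoc B A x,
      Ring.inverse_mul_cancel_left _ _ hB, Ring.inverse_mul_cancel_left _ _ hA]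
  have hCeq : C = Ring.inverse A * Ring.inverse B * A * (1 - A) := by
    have : C = Ring.inverse A * Ring.inverse B * (A - A * A) := by
      rw [← hBAC, cancel]
    rw [this]; noncomm_ring
  have hone : Ring.inverse A * Ring.inverse B * (B * A) = 1 := by
    have := cancel 1; rwa [mul_one] at this
  have hDeq : D = 1 - Ring.inverse A * Ring.inverse B * A * B := by
    have : D = Ring.inverse A * Ring.inverse B * (B * A - A * B) := by
      rw [h2, cancel]
    rw [this, mul_sub, hone, mul_assoc (Ring.inverse A * Ring.inverse B) A B]
  have hiA : IsUnit (Ring.inverse A) := isUnit_ringInverse.2 hA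
  have hiB : IsUnit (Ring.inverse B) := isUnit_ringInverse.2 hB
  have h1A : IsUnit (1 - A) := by
    have hu : IsUnit (A * (1 - A)) := by
      have : A * (1 - A) = B * A * C := by rw [hBAC]; noncomm_ring
      rw [this]; exact (hB.mul hA).mul hC
    have : (1 - A) = Ring.inverse A * (A * (1 - A)) :=
      (Ring.inverse_mul_cancel_left _ _ hA).symm
    rw [this]; exact hiA.mul hu
  refine ⟨hCeq, hDeq, h1A, ?_⟩
  have : 1 - D = Ring.inverse A * Ring.inverse B * A * B := by
    rw [hDeq]; noncomm_ring
  rw [this]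
  exact ((hiA.mul hiB).mul hA).mul hB
end

section
/- Let R be an associative ring with identity, not necessarily commutative, and let A, B, C, D ∈ R with A, B, C units. Then all seven Yang–Baxter equations (1) A = A² + BAC; (2) BA − AB = BAD; (3) CD − DC = CDA; (4) D = D² + CDB; (5) AC − CA = DAC; (6) DB − BD = ADB; (7) CB − BC = ADA − DAD hold if and only if the first four equations (1)–(4) hold; that is, under these unit hypotheses equations (1)–(4) imply equations (5), (6) and (7). -/
/-- In an associative (possibly noncommutative) unital ring, if `A, B, C`
are units, then the seven Yang–Baxter equations hold if and only if the first four
hold; i.e. under these unit hypotheses equations (1)–(4) imply (5), (6) and (7). -/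
theorem stmt_5 {R : Type*} [Ring R] (A B C D : R)
    (hA : IsUnit A) (hB : IsUnit B) (hC : IsUnit C) :
    (A = A * A + B * A * C ∧
     B * A - A * B = B * A * D ∧
     C * D - D * C = C * D * A ∧
     D = D * D + C * D * B ∧
     A * C - C * A = D * A * C ∧
     D * B - B * D = A * D * B ∧
     C * B - B * C = A * D * A - D * A * D) ↔
    (A = A * A + B * A * C ∧
     B * A - A * B = B * A * D ∧
     C * D - D * C = C * D * A ∧
     D = D * D + C * D * B) := by
  constructor
  · rintro ⟨h1, h2, h3, h4, -, -, -⟩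
    exact ⟨h1, h2, h3, h4⟩
  · rintro ⟨h1, h2, h3, h4⟩
    have E1 : A - (A * A + B * A * C) = 0 := sub_eq_zero.mpr h1
    have E2 : (B * A - A * B) - B * A * D = 0 := sub_eq_zero.mpr h2
    have E3 : (C * D - D * C) - C * D * A = 0 := sub_eq_zero.mpr h3
    have E4 : D - (D * D + C * D * B) = 0 := sub_eq_zero.mpr h4
    -- Equation (5):  B*A * s5 = e1*A - A*e1 + e2*(A*C)
    have k5 : B * (A * ((A * C - C * A) - D * A * C)) =
        (A - (A * A + B * A * C)) * A - A * (A - (A * A + B * A * C)) +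
          ((B * A - A * B) - B * A * D) * (A * C) := by noncomm_ring
    rw [E1, E2] at k5
    simp only [zero_mul, mul_zero, sub_zero, zero_sub, neg_zero, add_zero, zero_add] at k5
    have k5' : A * ((A * C - C * A) - D * A * C) = A * 0 := by
      rw [mul_zero]; exact hB.mul_left_cancel (by rw [k5, mul_zero])
    have s5 : (A * C - C * A) - D * A * C = 0 := hA.mul_left_cancel k5'

    -- Equation (6):  A * s6 = e2*D + e1*(D*B) - (B*A)*e4
    have k6 : A * ((D * B - B * D) - A * D * B) =
        ((B * A - A * B) - B * A * D) * D + (A - (A * A + B * A * C)) * (D * B) -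
          B * A * (D - (D * D + C * D * B)) := by noncomm_ring
    rw [E1, E2, E4] at k6
    simp only [zero_mul, mul_zero, sub_zero, zero_sub, neg_zero, add_zero, zero_add] at k6
    have k6' : A * ((D * B - B * D) - A * D * B) = A * 0 := by rw [k6, mul_zero]
    have s6 : (D * B - B * D) - A * D * B = 0 := hA.mul_left_cancel k6'
    -- Equation (7):
    -- A*B*A * s7 = -(A*B*B*A)*e3 - A*e1*B + A*B*e1 - A*B*e1*D + A*B*e1*(D*A)
    --              + A*e2*A - A*e2*(A*D) + A*A*e2 - A*e2 + A*B*e2*C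
    have k7 : A * (B * (A * ((C * B - B * C) - (A * D * A - D * A * D)))) =
        -(A * B * B * A * ((C * D - D * C) - C * D * A))
          - A * (A - (A * A + B * A * C)) * B
          + A * B * (A - (A * A + B * A * C))
          - A * B * (A - (A * A + B * A * C)) * D
          + A * B * (A - (A * A + B * A * C)) * (D * A)
          + A * ((B * A - A * B) - B * A * D) * A
          - A * ((B * A - A * B) - B * A * D) * (A * D)
          + A * A * ((B * A - A * B) - B * A * D)
          - A * ((B * A - A * B) - B * A * D)
          + A * B * ((B * A - A * B) - B * A * D) * C := by noncomm_ring
    rw [E1, E2, E3] at k7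
    simp only [zero_mul, mul_zero, sub_zero, zero_sub, neg_zero, add_zero, zero_add] at k7
    have k7a : B * (A * ((C * B - B * C) - (A * D * A - D * A * D))) = B * 0 := by
      rw [mul_zero]
      have : A * (B * (A * ((C * B - B * C) - (A * D * A - D * A * D)))) = A * 0 := by
        rw [k7, mul_zero]
      exact hA.mul_left_cancel this
    have k7b : A * ((C * B - B * C) - (A * D * A - D * A * D)) = A * 0 := by
      rw [mul_zero]; exact hB.mul_left_cancel k7a
    have s7 : (C * B - B * C) - (A * D * A - D * A * D) = 0 := hA.mul_left_cancel k7b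
    exact ⟨h1, h2, h3, h4, sub_eq_zero.mp s5, sub_eq_zero.mp s6, sub_eq_zero.mp s7⟩
end

section
/- Let R be an associative ring with identity, not necessarily commutative, let A, B, C, D ∈ R with A, B, C units, and assume equations (1) A = A² + BAC and (2) BA − AB = BAD hold. Set Θ = BA⁻¹B⁻¹A − A⁻¹B⁻¹AB − A + B⁻¹AB. Then: equation (5) AC − CA = DAC holds; equation (4) D = D² + CDB holds if and only if Θ = 0; equation (6) DB − BD = ADB holds if and only if Θ = 0; and equation (7) CB − BC = ADA − DAD holds if and only if Θ = 0. -/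
/-- In an associative (possibly noncommutative) unital ring, suppose
`A, B, C` are units and Yang–Baxter equations (1) and (2) hold. Let
`Θ = BA⁻¹B⁻¹A − A⁻¹B⁻¹AB − A + B⁻¹AB`. Then equation (5) holds, and each of
equations (4), (6), (7) holds if and only if `Θ = 0`. -/
theorem stmt_6 {R : Type*} [Ring R] (A B C D : R)
    (hA : IsUnit A) (hB : IsUnit B) (hC : IsUnit C)
    (h1 : A = A * A + B * A * C)
    (h2 : B * A - A * B = B * A * D)
    (Θ : R)
    (hΘ : Θ = B * Ring.inverse A * Ring.inverse B * A - Ring.inverse A * Ring.inverse B * A * B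
        - A + Ring.inverse B * A * B) :
    (A * C - C * A = D * A * C) ∧
    ((D = D * D + C * D * B) ↔ Θ = 0) ∧
    ((D * B - B * D = A * D * B) ↔ Θ = 0) ∧
    ((C * B - B * C = A * D * A - D * A * D) ↔ Θ = 0) := by
  set u := Ring.inverse A with hu_def
  set v := Ring.inverse B with hv_def
  have hAu : A * u = 1 := Ring.mul_inverse_cancel A hA
  have huA : u * A = 1 := Ring.inverse_mul_cancel A hA
  have hBv : B * v = 1 := Ring.mul_inverse_cancel B hB
  have hvB : v * B = 1 := Ring.inverse_mul_cancel B hB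
  have hAu' : ∀ x : R, A * (u * x) = x := fun x => by rw [← mul_assoc, hAu, one_mul]
  have huA' : ∀ x : R, u * (A * x) = x := fun x => by rw [← mul_assoc, huA, one_mul]
  have hBv' : ∀ x : R, B * (v * x) = x := fun x => by rw [← mul_assoc, hBv, one_mul]
  have hvB' : ∀ x : R, v * (B * x) = x := fun x => by rw [← mul_assoc, hvB, one_mul]
  have hu : IsUnit u := ⟨⟨u, A, huA, hAu⟩, rfl⟩
  have hv : IsUnit v := ⟨⟨v, B, hvB, hBv⟩, rfl⟩
  have hBAC : A - A * A = B * (A * C) := by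
    rw [← mul_assoc]; exact sub_eq_iff_eq_add'.mpr h1
  have hC2 : C = u * (v * (A - A * A)) := by
    rw [hBAC, hvB', huA']
  have hD2 : D = 1 - u * (v * (A * B)) := by
    have h2' : B * (A * D) = B * A - A * B := by rw [← mul_assoc, ← h2]
    have : D = u * (v * (B * (A * D))) := by rw [hvB', huA']
    rw [this, h2', mul_sub, mul_sub, hvB', huA]
  -- equation (5) holds
  have e5 : A * C - C * A = D * A * C := by
    rw [hC2, hD2]
    simp only [mul_sub, sub_mul, mul_add, add_mul, mul_assoc, mul_one, one_mul,
      hAu', huA', hBv', hvB']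
    abel
  refine ⟨e5, ?_, ?_, ?_⟩
  -- helper : Θ * X = 0 ↔ Θ = 0 for unit X
  · -- equation (4)
    have e4 : D - (D * D + C * D * B) = -(u * (v * (A * (Θ * B)))) := by
      rw [hC2, hD2, hΘ]
      simp only [mul_sub, sub_mul, mul_add, add_mul, mul_assoc, mul_one, one_mul,
        hAu', huA', hBv', hvB']
      abel
    constructor
    · intro h
      have hz : u * (v * (A * (Θ * B))) = 0 := by
        have : D - (D * D + C * D * B) = 0 := by rw [← h, sub_self]
        rw [e4, neg_eq_zero] at this
        exact this
      rw [hu.mul_right_eq_zero, hv.mul_right_eq_zero, hA.mul_right_eq_zero,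
        hB.mul_left_eq_zero] at hz
      exact hz
    · intro h
      have : D - (D * D + C * D * B) = 0 := by rw [e4, h]; simp
      exact sub_eq_zero.mp this
  · -- equation (6)
    have e6 : D * B - B * D - A * (D * B) = Θ * B := by
      rw [hD2, hΘ]
      simp only [mul_sub, sub_mul, mul_add, add_mul, mul_assoc, mul_one, one_mul,
        hAu', huA', hBv', hvB']
      abel
    constructor
    · intro h
      have hz : Θ * B = 0 := by rw [← e6, ← mul_assoc, ← h, sub_self]
      exact (hB.mul_left_eq_zero).mp hz
    · intro h
      have : D * B - B * D - A * (D * B) = 0 := by rw [e6, h, zero_mul]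
      rw [← mul_assoc] at this
      exact sub_eq_zero.mp this
  · -- equation (7)
    have h1A : IsUnit (1 - A) := by
      have : (1 : R) - A = u * (B * (A * C)) := by
        rw [← hBAC, mul_sub, huA', huA]
      rw [this]
      exact hu.mul (hB.mul (hA.mul hC))
    have hA1 : IsUnit (A - 1) := by
      rw [← neg_sub (1:R) A]; exact h1A.neg
    have e7 : C * B - B * C - (A * (D * A) - D * (A * D)) = Θ * (A - 1) := by
      rw [hC2, hD2, hΘ]
      simp only [mul_sub, sub_mul, mul_add, add_mul, mul_assoc, mul_one, one_mul,
        hAu', huA', hBv', hvB']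
      abel
    constructor
    · intro h
      have hz : Θ * (A - 1) = 0 := by
        rw [← e7, ← mul_assoc, ← mul_assoc, ← h, sub_self]
      exact (hA1.mul_left_eq_zero).mp hz
    · intro h
      have := e7
      rw [h, zero_mul, sub_eq_zero] at this
      rw [this]; noncomm_ring
end

section
/- Let S = [[A, B], [C, D]] be a switch over an associative unital ring R. Then A − 1 and D − 1 are units of R, and (D − 1)B⁻¹(A − 1)C⁻¹ = 1. -/
/-- A 2×2 matrix `[[A,B],[C,D]]` over an associative (possibly noncommutative)
unital ring `R` is a (linear) switch if `B` and `C` are units, either `D` and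
`Δ = B⁻¹A − D⁻¹C` are units or `A` and `Δ′ = C⁻¹D − A⁻¹B` are units, and the
four Yang–Baxter equations hold. -/
def IsSwitch {R : Type*} [Ring R] (A B C D : R) : Prop :=
  IsUnit B ∧ IsUnit C ∧
    ((IsUnit D ∧ IsUnit (Ring.inverse B * A - Ring.inverse D * C)) ∨
     (IsUnit A ∧ IsUnit (Ring.inverse C * D - Ring.inverse A * B))) ∧
    A = A * A + B * A * C ∧
    B * A - A * B = B * A * D ∧
    C * D - D * C = C * D * A ∧
    D = D * D + C * D * B

/-- For a switch `[[A,B],[C,D]]` over an associative unital ring `R`,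
the elements `A − 1` and `D − 1` are units, and `(D − 1)B⁻¹(A − 1)C⁻¹ = 1`. -/
theorem stmt_7 {R : Type*} [Ring R] (A B C D : R) (h : IsSwitch A B C D) :
    IsUnit (A - 1) ∧ IsUnit (D - 1) ∧
    (D - 1) * Ring.inverse B * (A - 1) * Ring.inverse C = 1 := by
  obtain ⟨hB, hC, hcase, e1, e2, e3, e4⟩ := h
  obtain ⟨B', rfl⟩ := hB
  obtain ⟨C', rfl⟩ := hC
  suffices h : IsUnit (1 - A) ∧ IsUnit (1 - D) ∧
      ((1 : R) - D) * ↑B'⁻¹ * ((1 : R) - A) = ↑C' by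
    obtain ⟨hA1, hD1, key⟩ := h
    refine ⟨by simpa [neg_sub] using hA1.neg, by simpa [neg_sub] using hD1.neg, ?_⟩
    rw [Ring.inverse_unit, Ring.inverse_unit]
    have h2 : (D - 1) * ↑B'⁻¹ * (A - 1) = ↑C' := by
      calc (D - 1) * ↑B'⁻¹ * (A - 1)
          = ((1 : R) - D) * ↑B'⁻¹ * ((1 : R) - A) := by noncomm_ring
        _ = ↑C' := key
    rw [h2, Units.mul_inv]
  rcases hcase with ⟨hD, -⟩ | ⟨hA, -⟩
  · obtain ⟨D', rfl⟩ := hD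
    have e4' : (↑D' : R) - ↑D' * ↑D' = ↑C' * ↑D' * ↑B' := sub_eq_of_eq_add' e4
    have key1 : (1 : R) - ↑D' = ↑D'⁻¹ * (↑C' * ↑D' * ↑B') := by
      rw [← e4', mul_sub, ← mul_assoc, Units.inv_mul, one_mul]
    have hu1D : IsUnit ((1 : R) - ↑D') := by
      rw [key1]
      exact (D'⁻¹).isUnit.mul ((C'.isUnit.mul D'.isUnit).mul B'.isUnit)
    have e3'' : (↑C' : R) * (↑D' * ((1 : R) - A)) = ↑D' * ↑C' := by
      calc (↑C' : R) * (↑D' * ((1 : R) - A))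
          = ↑C' * ↑D' - ↑C' * ↑D' * A := by noncomm_ring
        _ = ↑C' * ↑D' - (↑C' * ↑D' - ↑D' * ↑C') := by rw [← e3]
        _ = ↑D' * ↑C' := by noncomm_ring
    have key : ((1 : R) - ↑D') * ↑B'⁻¹ * ((1 : R) - A) = ↑C' := by
      rw [key1]
      simp only [mul_assoc, Units.mul_inv_cancel_left]
      rw [e3'', Units.inv_mul_cancel_left]
    obtain ⟨E, hE⟩ := hu1D
    have hA1 : (1 : R) - A = ↑B' * (↑E⁻¹ * ↑C') := by
      rw [← key, ← hE]
      simp only [mul_assoc, Units.inv_mul_cancel_left, Units.mul_inv_cancel_left]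
    have huA : IsUnit ((1 : R) - A) := by
      rw [hA1]; exact B'.isUnit.mul ((E⁻¹).isUnit.mul C'.isUnit)
    exact ⟨huA, ⟨E, hE⟩, key⟩
  · obtain ⟨A', rfl⟩ := hA
    have e1' : (↑A' : R) - ↑A' * ↑A' = ↑B' * ↑A' * ↑C' := sub_eq_of_eq_add' e1
    have key1 : (1 : R) - ↑A' = ↑A'⁻¹ * (↑B' * ↑A' * ↑C') := by
      rw [← e1', mul_sub, ← mul_assoc, Units.inv_mul, one_mul]
    have hu1A : IsUnit ((1 : R) - ↑A') := by
      rw [key1]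
      exact (A'⁻¹).isUnit.mul ((B'.isUnit.mul A'.isUnit).mul C'.isUnit)
    have e2'' : (↑B' : R) * (↑A' * ((1 : R) - D)) = ↑A' * ↑B' := by
      calc (↑B' : R) * (↑A' * ((1 : R) - D))
          = ↑B' * ↑A' - ↑B' * ↑A' * D := by noncomm_ring
        _ = ↑B' * ↑A' - (↑B' * ↑A' - ↑A' * ↑B') := by rw [← e2]
        _ = ↑A' * ↑B' := by noncomm_ring
    have key2 : ((1 : R) - ↑A') * ↑C'⁻¹ * ((1 : R) - D) = ↑B' := by
      rw [key1]
      simp only [mul_assoc, Units.mul_inv_cancel_left]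
      rw [e2'', Units.inv_mul_cancel_left]
    obtain ⟨F, hF⟩ := hu1A
    have hD1 : (1 : R) - D = ↑C' * (↑F⁻¹ * ↑B') := by
      rw [← key2, ← hF]
      simp only [mul_assoc, Units.inv_mul_cancel_left, Units.mul_inv_cancel_left]
    have hu1D : IsUnit ((1 : R) - D) := by
      rw [hD1]; exact C'.isUnit.mul ((F⁻¹).isUnit.mul B'.isUnit)
    obtain ⟨G, hG⟩ := hu1D
    have hu : F * C'⁻¹ * G = B' := by
      apply Units.ext
      rw [Units.val_mul, Units.val_mul, hF, hG]
      exact key2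
    have hu2 : G * B'⁻¹ * F = C' := by rw [← hu]; group
    have key : ((1 : R) - D) * ↑B'⁻¹ * ((1 : R) - ↑A') = ↑C' := by
      rw [← hG, ← hF]
      exact_mod_cast congrArg Units.val hu2
    exact ⟨⟨F, hF⟩, ⟨G, hG⟩, key⟩
end

section
/- Let S = [[A, B], [C, D]] be a switch over an associative unital ring R, and set λ = B⁻¹(1 − A). Then λ is a unit of R, λ = (1 − D)⁻¹C, and the sideways matrices S⁺₋ = [[DB⁻¹, C − DB⁻¹A], [B⁻¹, −B⁻¹A]] and S⁻₊ = [[−C⁻¹D, C⁻¹], [B − AC⁻¹D, AC⁻¹]] preserve the diagonal: for every a ∈ R, S⁺₋ applied to the column vector (a, a)ᵀ equals (λa, λa)ᵀ, and S⁻₊ applied to (a, a)ᵀ equals (λ⁻¹a, λ⁻¹a)ᵀ. -/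
/-- For a switch `[[A,B],[C,D]]` with `λ = B⁻¹(1 − A)`: `λ` is a unit,
`λ = (1 − D)⁻¹C`, and the sideways matrices `S⁺₋` and `S⁻₊` preserve the diagonal,
sending `(a,a)ᵀ` to `(λa, λa)ᵀ` and `(λ⁻¹a, λ⁻¹a)ᵀ` respectively. -/
theorem stmt_8 {R : Type*} [Ring R] (A B C D : R) (h : IsSwitch A B C D)
    (lam : R) (hlam : lam = Ring.inverse B * (1 - A)) :
    IsUnit lam ∧
    lam = Ring.inverse (1 - D) * C ∧
    (∀ a : R,
      (!![D * Ring.inverse B, C - D * Ring.inverse B * A;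
          Ring.inverse B, -(Ring.inverse B * A)] : Matrix (Fin 2) (Fin 2) R).mulVec
        ![a, a] = ![lam * a, lam * a]) ∧
    (∀ a : R,
      (!![-(Ring.inverse C * D), Ring.inverse C;
          B - A * Ring.inverse C * D, A * Ring.inverse C] : Matrix (Fin 2) (Fin 2) R).mulVec
        ![a, a] = ![Ring.inverse lam * a, Ring.inverse lam * a]) := by
  obtain ⟨hB, hC, hcase, e1, e2, e3, e4⟩ := h
  set b := Ring.inverse B with hb
  set c := Ring.inverse C with hc
  have bB : ∀ x : R, b * (B * x) = x := fun x => by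
    rw [← mul_assoc, Ring.inverse_mul_cancel B hB, one_mul]
  have Bb : ∀ x : R, B * (b * x) = x := fun x => by
    rw [← mul_assoc, Ring.mul_inverse_cancel B hB, one_mul]
  have cC : ∀ x : R, c * (C * x) = x := fun x => by
    rw [← mul_assoc, Ring.inverse_mul_cancel C hC, one_mul]
  have Cc : ∀ x : R, C * (c * x) = x := fun x => by
    rw [← mul_assoc, Ring.mul_inverse_cancel C hC, one_mul]
  -- key identities (proved by case analysis on which diagonal entry is a unit)
  have hI : (1 - D) * lam = C := by
    rcases hcase with ⟨hD, -⟩ | ⟨hA, -⟩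
    · set d := Ring.inverse D with hd
      have dD : ∀ x : R, d * (D * x) = x := fun x => by
        rw [← mul_assoc, Ring.inverse_mul_cancel D hD, one_mul]
      have Dd : ∀ x : R, D * (d * x) = x := fun x => by
        rw [← mul_assoc, Ring.mul_inverse_cancel D hD, one_mul]
      have h4 : D * (1 - D) = C * (D * B) := by
        rw [← sub_eq_zero]
        have : D * (1 - D) - C * (D * B) = D - (D * D + C * D * B) := by noncomm_ring
        rw [this, ← e4, sub_self]
      have h3 : C * (D * (1 - A)) = D * C := by
        rw [← sub_eq_zero]
        have : C * (D * (1 - A)) - D * C = (C * D - D * C) - C * D * A := by noncomm_ring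
        rw [this, e3, sub_self]
      have w1 : 1 - D = d * (C * (D * B)) := by rw [← h4, dD]
      have w2 : 1 - A = d * (c * (D * C)) := by rw [← h3, cC, dD]
      rw [hlam, w1, w2]
      simp only [mul_assoc, Bb, Dd, Cc, cC, dD, bB]
    · set a := Ring.inverse A with ha
      have aA : ∀ x : R, a * (A * x) = x := fun x => by
        rw [← mul_assoc, Ring.inverse_mul_cancel A hA, one_mul]
      have Aa : ∀ x : R, A * (a * x) = x := fun x => by
        rw [← mul_assoc, Ring.mul_inverse_cancel A hA, one_mul]
      have h1 : A * (1 - A) = B * (A * C) := by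
        rw [← sub_eq_zero]
        have : A * (1 - A) - B * (A * C) = A - (A * A + B * A * C) := by noncomm_ring
        rw [this, ← e1, sub_self]
      have h2 : B * (A * (1 - D)) = A * B := by
        rw [← sub_eq_zero]
        have : B * (A * (1 - D)) - A * B = (B * A - A * B) - B * A * D := by noncomm_ring
        rw [this, e2, sub_self]
      have u1 : 1 - A = a * (B * (A * C)) := by rw [← h1, aA]
      have u2 : 1 - D = a * (b * (A * B)) := by rw [← h2, bB, aA]
      rw [hlam, u1, u2]
      simp only [mul_assoc, Bb, Aa, aA, bB]
  have hII : (1 - A) * (c * (1 - D)) = B := by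
    rcases hcase with ⟨hD, -⟩ | ⟨hA, -⟩
    · set d := Ring.inverse D with hd
      have dD : ∀ x : R, d * (D * x) = x := fun x => by
        rw [← mul_assoc, Ring.inverse_mul_cancel D hD, one_mul]
      have Dd : ∀ x : R, D * (d * x) = x := fun x => by
        rw [← mul_assoc, Ring.mul_inverse_cancel D hD, one_mul]
      have h4 : D * (1 - D) = C * (D * B) := by
        rw [← sub_eq_zero]
        have : D * (1 - D) - C * (D * B) = D - (D * D + C * D * B) := by noncomm_ring
        rw [this, ← e4, sub_self]
      have h3 : C * (D * (1 - A)) = D * C := by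
        rw [← sub_eq_zero]
        have : C * (D * (1 - A)) - D * C = (C * D - D * C) - C * D * A := by noncomm_ring
        rw [this, e3, sub_self]
      have w2 : 1 - A = d * (c * (D * C)) := by rw [← h3, cC, dD]
      rw [w2]
      simp only [mul_assoc, Cc, h4, cC, dD]
    · set a := Ring.inverse A with ha
      have aA : ∀ x : R, a * (A * x) = x := fun x => by
        rw [← mul_assoc, Ring.inverse_mul_cancel A hA, one_mul]
      have h1 : A * (1 - A) = B * (A * C) := by
        rw [← sub_eq_zero]
        have : A * (1 - A) - B * (A * C) = A - (A * A + B * A * C) := by noncomm_ring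
        rw [this, ← e1, sub_self]
      have h2 : B * (A * (1 - D)) = A * B := by
        rw [← sub_eq_zero]
        have : B * (A * (1 - D)) - A * B = (B * A - A * B) - B * A * D := by noncomm_ring
        rw [this, e2, sub_self]
      have u1 : 1 - A = a * (B * (A * C)) := by rw [← h1, aA]
      rw [u1]
      simp only [mul_assoc, Cc, h2, aA]
  -- consequences
  set mu := c * (1 - D) with hmu
  have hlm : lam * mu = 1 := by
    rw [hlam, hmu, mul_assoc, hII, Ring.inverse_mul_cancel B hB]
  have hml : mu * lam = 1 := by
    rw [hmu, mul_assoc, hI, Ring.inverse_mul_cancel C hC]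
  have hu : IsUnit lam := ⟨⟨lam, mu, hlm, hml⟩, rfl⟩
  have hinv : Ring.inverse lam = mu := Ring.inverse_unit ⟨lam, mu, hlm, hml⟩
  have h1D : 1 - D = C * mu := by rw [← hI, mul_assoc, hlm, mul_one]
  have hD1 : IsUnit (1 - D) := by
    rw [h1D]; exact hC.mul ⟨⟨mu, lam, hml, hlm⟩, rfl⟩
  refine ⟨hu, ?_, ?_, ?_⟩
  · rw [← hI, ← mul_assoc, Ring.inverse_mul_cancel _ hD1, one_mul]
  · intro a
    have hDl : lam - D * lam = C := by rw [← hI]; noncomm_ring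
    have r1 : D * b + (C - D * b * A) = lam := by
      rw [← hDl, hlam]; noncomm_ring
    have r2 : b + -(b * A) = lam := by rw [hlam]; noncomm_ring
    funext i
    fin_cases i
    · simp [Matrix.mulVec, dotProduct, Fin.sum_univ_two, ← add_mul, r1]
    · simp [Matrix.mulVec, dotProduct, Fin.sum_univ_two]
      rw [hlam]; noncomm_ring
  · intro a
    have hAm : mu - A * mu = B := by rw [← hII, hmu]; noncomm_ring
    have s1 : -(c * D) + c = mu := by rw [hmu]; noncomm_ring
    have s2 : B - A * c * D + A * c = mu := by
      rw [← hAm, hmu]; noncomm_ring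
    rw [hinv]
    funext i
    fin_cases i
    · simp [Matrix.mulVec, dotProduct, Fin.sum_univ_two]
      rw [hmu]; noncomm_ring
    · simp [Matrix.mulVec, dotProduct, Fin.sum_univ_two, ← add_mul, s2]
end

section
/- Let R be a commutative ring with identity and let S = [[A, B], [C, D]] be a switch over R. Then either A = 0 and D = 1 − BC with D a unit, or D = 0 and A = 1 − BC with A a unit; that is, S is of the form [[1 − μλ, μ], [λ, 0]] or [[0, μ], [λ, 1 − μλ]] for units λ, μ of R (the Alexander switch). -/
/-- Over a commutative ring, every switch is an Alexander switch:
either `A = 0`, `D = 1 − BC` with `D` a unit, or `D = 0`, `A = 1 − BC` with `A`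
a unit. -/
theorem stmt_9 {R : Type*} [CommRing R] (A B C D : R) (h : IsSwitch A B C D) :
    (A = 0 ∧ D = 1 - B * C ∧ IsUnit D) ∨ (D = 0 ∧ A = 1 - B * C ∧ IsUnit A) := by
  obtain ⟨hB, hC, hcase, h1, h2, h3, h4⟩ := h
  have hBAD : B * (A * D) = 0 := by linear_combination -h2
  have hAD : A * D = 0 := (hB.mul_right_eq_zero).mp hBAD
  rcases hcase with ⟨hD, -⟩ | ⟨hA, -⟩
  · left
    have hA0 : A = 0 := by
      have : D * A = 0 := by linear_combination hAD
      exact (hD.mul_right_eq_zero).mp this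
    refine ⟨hA0, ?_, hD⟩
    have hkey : D * 1 = D * (D + C * B) := by linear_combination h4
    have h1' := hD.mul_left_cancel hkey
    linear_combination -h1'
  · right
    have hD0 : D = 0 := by
      exact (hA.mul_right_eq_zero).mp hAD
    refine ⟨hD0, ?_, hA⟩
    have hkey : A * 1 = A * (A + B * C) := by linear_combination h1
    have h1' := hA.mul_left_cancel hkey
    linear_combination -h1'
end

section
/- Let U and V be real quaternions with zero real part and norm 1 (pure unit quaternions) satisfying UV = −VU (equivalently, U is perpendicular to V). Then the matrix S = [[1 + U, −V], [V, 1 + U]] with entries in ℍ is a switch. In particular the Budapest switch [[1 + i, −j], [j, 1 + i]] (the case U = i, V = j) is a switch. -/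
open Quaternion

/-- The quaternion `i`. -/
noncomputable def qi : ℍ[ℝ] := ⟨0, 1, 0, 0⟩

/-- The quaternion `j`. -/
noncomputable def qj : ℍ[ℝ] := ⟨0, 0, 1, 0⟩

lemma pure_sq (U : ℍ[ℝ]) (h0 : U.re = 0) (h1 : ‖U‖ = 1) : U * U = -1 := by
  have hs : star U = -U := Quaternion.star_eq_neg.mpr h0
  have h := Quaternion.self_mul_star (a := U)
  rw [hs, mul_neg, Quaternion.normSq_eq_norm_mul_self, h1] at h
  have := congrArg Neg.neg h
  simpa using this

lemma main_switch (U V : ℍ[ℝ]) (hU0 : U.re = 0) (hV0 : V.re = 0)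
    (hU1 : ‖U‖ = 1) (hV1 : ‖V‖ = 1) (hc : U * V = -(V * U)) :
    IsSwitch (1 + U) (-V) V (1 + U) := by
  have hU2 := pure_sq U hU0 hU1
  have hV2 := pure_sq V hV0 hV1
  have hc' : V * U = -(U * V) := by rw [hc, neg_neg]
  have hVne : V ≠ 0 := by intro h; rw [h] at hV1; simp at hV1
  have hDne : (1 + U) ≠ 0 := by
    intro h
    have : (1 + U).re = 0 := by rw [h]; simp
    rw [Quaternion.re_add, hU0, Quaternion.re_one] at this
    norm_num at this
  have hVUV : V * U * V = U := by
    calc V * U * V = -(U * V) * V := by rw [hc']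
      _ = -(U * (V * V)) := by noncomm_ring
      _ = U := by rw [hV2]; noncomm_ring
  have h2ne : (2 : ℍ[ℝ]) ≠ 0 := by
    have h : ((2:ℝ) : ℍ[ℝ]) ≠ ((0:ℝ) : ℍ[ℝ]) := by
      simpa using Quaternion.coe_injective.ne (show (2:ℝ) ≠ 0 by norm_num)
    exact h
  have h12 : (1 + U) * (1 - U) = 2 := by
    have h : (1 + U) * (1 - U) = 1 - U * U := by noncomm_ring
    rw [h, hU2]; norm_num
  have hinvV : Ring.inverse (-V) = V := by
    rw [Ring.inverse_eq_inv]
    exact inv_eq_of_mul_eq_one_right (by rw [neg_mul, hV2]; norm_num)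
  have hinvD : Ring.inverse (1 + U) = (1 - U) * (2 : ℍ[ℝ])⁻¹ := by
    rw [Ring.inverse_eq_inv]
    exact inv_eq_of_mul_eq_one_right (by rw [← mul_assoc, h12, mul_inv_cancel₀ h2ne])
  have hhalf : (1 : ℍ[ℝ]) - (2 : ℍ[ℝ])⁻¹ = (2 : ℍ[ℝ])⁻¹ := by
    have h := mul_inv_cancel₀ h2ne
    calc (1 : ℍ[ℝ]) - (2 : ℍ[ℝ])⁻¹ = 2 * (2 : ℍ[ℝ])⁻¹ - 1 * (2 : ℍ[ℝ])⁻¹ := by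
          rw [h]; noncomm_ring
      _ = (2 : ℍ[ℝ])⁻¹ := by noncomm_ring
  have hcomm2 : (2 : ℍ[ℝ])⁻¹ * V = V * (2 : ℍ[ℝ])⁻¹ :=
    ((Commute.ofNat_right V 2).inv_right₀.eq).symm
  have hΔ : Ring.inverse (-V) * (1 + U) - Ring.inverse (1 + U) * V
      = V * (1 + U) * (2 : ℍ[ℝ])⁻¹ := by
    rw [hinvV, hinvD]
    calc V * (1 + U) - (1 - U) * (2 : ℍ[ℝ])⁻¹ * V
        = V * (1 + U) - (1 - U) * V * (2 : ℍ[ℝ])⁻¹ := by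
          rw [mul_assoc, hcomm2, ← mul_assoc]
      _ = V * (1 + U) - (V - U * V) * (2 : ℍ[ℝ])⁻¹ := by noncomm_ring
      _ = V * (1 + U) - (V - -(V * U)) * (2 : ℍ[ℝ])⁻¹ := by rw [hc]
      _ = (V + V * U) * (1 - (2 : ℍ[ℝ])⁻¹) := by noncomm_ring
      _ = (V + V * U) * (2 : ℍ[ℝ])⁻¹ := by rw [hhalf]
      _ = V * (1 + U) * (2 : ℍ[ℝ])⁻¹ := by noncomm_ring
  refine ⟨isUnit_iff_ne_zero.mpr (neg_ne_zero.mpr hVne), isUnit_iff_ne_zero.mpr hVne,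
    Or.inl ⟨isUnit_iff_ne_zero.mpr hDne, ?_⟩, ?_, ?_, ?_, ?_⟩
  · rw [hΔ]
    exact isUnit_iff_ne_zero.mpr
      (mul_ne_zero (mul_ne_zero hVne hDne) (inv_ne_zero h2ne))
  · calc (1 + U) = 1 + U + U + (-1) + (-(-1) - U) := by noncomm_ring
      _ = 1 + U + U + U * U + (-(V * V) - V * U * V) := by rw [hU2, hV2, hVUV]
      _ = (1 + U) * (1 + U) + -V * (1 + U) * V := by noncomm_ring
  · calc -V * (1 + U) - (1 + U) * -V = U * V - V * U := by noncomm_ring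
      _ = -(V * U) - V * U := by rw [hc]
      _ = -V - V * U - V * U - V * (-1) := by noncomm_ring
      _ = -V - V * U - V * U - V * (U * U) := by rw [hU2]
      _ = -V * (1 + U) * (1 + U) := by noncomm_ring
  · calc V * (1 + U) - (1 + U) * V = V * U - U * V := by noncomm_ring
      _ = V * U - -(V * U) := by rw [hc]
      _ = V + V * U + V * U + V * (-1) := by noncomm_ring
      _ = V + V * U + V * U + V * (U * U) := by rw [hU2]
      _ = V * (1 + U) * (1 + U) := by noncomm_ring
  · calc (1 + U) = 1 + U + U + (-1) + (-(-1) - U) := by noncomm_ring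
      _ = 1 + U + U + U * U + (-(V * V) - V * U * V) := by rw [hU2, hV2, hVUV]
      _ = (1 + U) * (1 + U) + V * (1 + U) * -V := by noncomm_ring

/-- For pure unit quaternions `U ⊥ V` (i.e. `UV = −VU`), the matrix
`[[1 + U, −V], [V, 1 + U]]` is a switch; in particular the Budapest switch
`[[1 + i, −j], [j, 1 + i]]` is a switch. -/
theorem stmt_10 :
    (∀ U V : ℍ[ℝ], U.re = 0 → V.re = 0 → ‖U‖ = 1 → ‖V‖ = 1 → U * V = -(V * U) →
      IsSwitch (1 + U) (-V) V (1 + U)) ∧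
    IsSwitch (1 + qi) (-qj) qj (1 + qi) := by
  constructor
  · exact main_switch
  · apply main_switch qi qj rfl rfl
    · have h : normSq qi = 1 := by rw [Quaternion.normSq_def']; simp [qi]
      rw [Quaternion.normSq_eq_norm_mul_self] at h
      nlinarith [norm_nonneg qi]
    · have h : normSq qj = 1 := by rw [Quaternion.normSq_def']; simp [qj]
      rw [Quaternion.normSq_eq_norm_mul_self] at h
      nlinarith [norm_nonneg qj]
    · ext <;> simp [Quaternion.re_mul, Quaternion.imI_mul,
        Quaternion.imJ_mul, Quaternion.imK_mul] <;> simp [qi, qj]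
end

section
/- Let S = [[A, B], [C, D]] be a switch with entries in the real quaternions ℍ. Then the matrix S* = [[conj(A), conj(C)], [conj(B), conj(D)]], where conj denotes quaternion conjugation, satisfies all seven Yang–Baxter equations and is invertible in the ring of 2×2 matrices over ℍ. -/
open Quaternion

section Aux

variable {K : Type*} [DivisionRing K]

/-- Key lemma: in a division ring, if `B, C, D` are nonzero and the Yang–Baxter
equations (2), (3), (4) hold, then equations (5), (6), (7) hold. -/
lemma aux_seven {A B C D : K} (hB : B ≠ 0) (hC : C ≠ 0) (hD : D ≠ 0)
    (e2 : B * A - A * B = B * A * D)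
    (e3 : C * D - D * C = C * D * A)
    (e4 : D = D * D + C * D * B) :
    (A * C - C * A = D * A * C) ∧ (D * B - B * D = A * D * B) ∧
      (C * B - B * C = A * D * A - D * A * D) := by
  have h4 : C * D * B = D - D * D := by
    rw [eq_sub_iff_add_eq, add_comm, ← e4]
  have hCD : C * D = D * (1 - D) * B⁻¹ := by
    have h := congrArg (· * B⁻¹) h4
    simp only [mul_assoc, mul_inv_cancel₀ hB, mul_one] at h
    rw [h]; noncomm_ring
  have h3 : D * ((1 - D) * B⁻¹ - C) = D * ((1 - D) * B⁻¹ * A) := by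
    have l1 : D * ((1 - D) * B⁻¹ - C) = C * D - D * C := by
      rw [mul_sub, ← mul_assoc, ← hCD]
    have l2 : D * ((1 - D) * B⁻¹ * A) = C * D * A := by
      rw [← mul_assoc, ← mul_assoc, ← hCD]
    rw [l1, l2]; exact e3
  have h3' := mul_left_cancel₀ hD h3
  have hQ : C = (1 - D) * B⁻¹ * (1 - A) := by
    rw [sub_eq_iff_eq_add] at h3'
    calc C = ((1 - D) * B⁻¹ * A + C) - (1 - D) * B⁻¹ * A := by noncomm_ring
      _ = (1 - D) * B⁻¹ - (1 - D) * B⁻¹ * A := by rw [← h3']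
      _ = (1 - D) * B⁻¹ * (1 - A) := by noncomm_ring
  have hd1 : (1 : K) - D ≠ 0 := by
    intro h; apply hC; rw [hQ, h, zero_mul, zero_mul]
  have hP : A * B = B * A * (1 - D) := by
    calc A * B = B * A - (B * A - A * B) := by noncomm_ring
      _ = B * A - B * A * D := by rw [e2]
      _ = B * A * (1 - D) := by noncomm_ring
  have k1 : B⁻¹ * (A * B) = A * (1 - D) := by
    rw [hP, ← mul_assoc, ← mul_assoc, inv_mul_cancel₀ hB, one_mul]
  have k1' : A * (1 - D) * B⁻¹ = B⁻¹ * A := by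
    rw [← k1, mul_assoc, mul_assoc, mul_inv_cancel₀ hB, mul_one]
  have g5 : (1 - D) * (A * C) = C * A := by
    calc (1 - D) * (A * C) = (1 - D) * (A * (1 - D) * B⁻¹) * (1 - A) := by
          rw [hQ]; noncomm_ring
      _ = (1 - D) * (B⁻¹ * A) * (1 - A) := by rw [k1']
      _ = ((1 - D) * B⁻¹ * (1 - A)) * A := by noncomm_ring
      _ = C * A := by rw [hQ]
  have goal5 : A * C - C * A = D * A * C := by
    calc A * C - C * A = A * C - (1 - D) * (A * C) := by rw [g5]
      _ = D * A * C := by noncomm_ring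
  have h6 : (1 - D) * (B⁻¹ * ((1 - A) * (D * B))) = (1 - D) * D := by
    calc (1 - D) * (B⁻¹ * ((1 - A) * (D * B))) = C * D * B := by
          rw [hQ]; noncomm_ring
      _ = D - D * D := h4
      _ = (1 - D) * D := by noncomm_ring
  have h6' := mul_left_cancel₀ hd1 h6
  have h6'' : (1 - A) * (D * B) = B * D := by
    have h := congrArg (B * ·) h6'
    simpa only [← mul_assoc, mul_inv_cancel₀ hB, one_mul] using h
  have goal6 : D * B - B * D = A * D * B := by
    rw [← h6'']; noncomm_ring
  have hx : B⁻¹ * ((1 - A) * B) = 1 - A * (1 - D) := by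
    calc B⁻¹ * ((1 - A) * B) = B⁻¹ * B - B⁻¹ * (A * B) := by noncomm_ring
      _ = 1 - A * (1 - D) := by rw [inv_mul_cancel₀ hB, k1]
  have hy : B * D * B⁻¹ = (1 - A) * D := by
    have h := congrArg (· * B⁻¹) h6''.symm
    simpa only [mul_assoc, mul_inv_cancel₀ hB, mul_one] using h
  have hz : B * ((1 - D) * B⁻¹) = 1 - (1 - A) * D := by
    calc B * ((1 - D) * B⁻¹) = B * B⁻¹ - B * D * B⁻¹ := by noncomm_ring
      _ = 1 - (1 - A) * D := by rw [mul_inv_cancel₀ hB, hy]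
  have goal7 : C * B - B * C = A * D * A - D * A * D := by
    calc C * B - B * C
        = (1 - D) * (B⁻¹ * ((1 - A) * B)) - (B * ((1 - D) * B⁻¹)) * (1 - A) := by
          rw [hQ]; noncomm_ring
      _ = (1 - D) * (1 - A * (1 - D)) - (1 - (1 - A) * D) * (1 - A) := by
          rw [hx, hz]
      _ = A * D * A - D * A * D := by noncomm_ring
  exact ⟨goal5, goal6, goal7⟩

lemma unit_diag {a d : K} (ha : a ≠ 0) (hd : d ≠ 0) :
    IsUnit (!![a, 0; 0, d] : Matrix (Fin 2) (Fin 2) K) := by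
  refine ⟨⟨_, !![a⁻¹, 0; 0, d⁻¹], ?_, ?_⟩, rfl⟩ <;>
    simp [Matrix.mul_fin_two, Matrix.one_fin_two, mul_inv_cancel₀, inv_mul_cancel₀, ha, hd]

lemma unit_upper (u : K) :
    IsUnit (!![1, u; 0, 1] : Matrix (Fin 2) (Fin 2) K) := by
  refine ⟨⟨_, !![1, -u; 0, 1], ?_, ?_⟩, rfl⟩ <;>
    simp [Matrix.mul_fin_two, Matrix.one_fin_two]

lemma unit_lower (u : K) :
    IsUnit (!![1, 0; u, 1] : Matrix (Fin 2) (Fin 2) K) := by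
  refine ⟨⟨_, !![1, 0; -u, 1], ?_, ?_⟩, rfl⟩ <;>
    simp [Matrix.mul_fin_two, Matrix.one_fin_two]

end Aux

/-- If `[[A,B],[C,D]]` is a switch over the real quaternions, then
`S* = [[conj A, conj C], [conj B, conj D]]` satisfies all seven Yang–Baxter
equations (as the quadruple `(A',B',C',D') = (conj A, conj C, conj B, conj D)`)
and is invertible in the ring of 2×2 matrices over ℍ.  Here quaternion
conjugation is `star`. -/
theorem stmt_13 (A B C D : ℍ[ℝ]) (h : IsSwitch A B C D) :
    (star A = star A * star A + star C * star A * star B ∧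
     star C * star A - star A * star C = star C * star A * star D ∧
     star B * star D - star D * star B = star B * star D * star A ∧
     star D = star D * star D + star B * star D * star C ∧
     star A * star B - star B * star A = star D * star A * star B ∧
     star D * star C - star C * star D = star A * star D * star C ∧
     star B * star C - star C * star B =
       star A * star D * star A - star D * star A * star D) ∧
    IsUnit (!![star A, star C; star B, star D] : Matrix (Fin 2) (Fin 2) ℍ[ℝ]) := by
  obtain ⟨hB, hC, hcase, e1, e2, e3, e4⟩ := h
  rw [isUnit_iff_ne_zero] at hB hC
  simp only [Ring.inverse_eq_inv] at hcase
  -- the three extra Yang–Baxter equations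
  have extra : (A * C - C * A = D * A * C) ∧ (D * B - B * D = A * D * B) ∧
      (C * B - B * C = A * D * A - D * A * D) := by
    rcases hcase with ⟨hD, -⟩ | ⟨hA, -⟩
    · exact aux_seven hB hC (isUnit_iff_ne_zero.mp hD) e2 e3 e4
    · obtain ⟨g5, g6, g7⟩ := aux_seven hC hB (isUnit_iff_ne_zero.mp hA) e3 e2 e1
      refine ⟨g6, g5, ?_⟩
      have := congrArg Neg.neg g7
      rw [neg_sub, neg_sub] at this
      exact this
  obtain ⟨e5, e6, e7⟩ := extra
  constructor
  · refine ⟨?_, ?_, ?_, ?_, ?_, ?_, ?_⟩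
    · simpa only [star_add, star_mul, mul_assoc] using congrArg star e1
    · simpa only [star_sub, star_mul, mul_assoc] using congrArg star e5
    · simpa only [star_sub, star_mul, mul_assoc] using congrArg star e6
    · simpa only [star_add, star_mul, mul_assoc] using congrArg star e4
    · simpa only [star_sub, star_mul, mul_assoc] using congrArg star e2
    · simpa only [star_sub, star_mul, mul_assoc] using congrArg star e3
    · simpa only [star_sub, star_mul, mul_assoc] using congrArg star e7
  · -- invertibility
    have hM : IsUnit (!![A, B; C, D] : Matrix (Fin 2) (Fin 2) ℍ[ℝ]) := by
      rcases hcase with ⟨hD, hΔ⟩ | ⟨hA, hΔ⟩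
      · rw [isUnit_iff_ne_zero] at hD hΔ
        have hX : A - B * (D⁻¹ * C) ≠ 0 := by
          have h : A - B * (D⁻¹ * C) = B * (B⁻¹ * A - D⁻¹ * C) := by
            rw [mul_sub, mul_inv_cancel_left₀ hB]
          rw [h]
          exact mul_ne_zero hB hΔ
        have hfac : (!![A, B; C, D] : Matrix (Fin 2) (Fin 2) ℍ[ℝ]) =
            !![1, B * D⁻¹; 0, 1] * !![A - B * (D⁻¹ * C), 0; 0, D] *
              !![1, 0; D⁻¹ * C, 1] := by
          rw [Matrix.mul_fin_two, Matrix.mul_fin_two]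
          simp only [one_mul, mul_one, zero_mul, mul_zero, add_zero, zero_add,
            mul_assoc, inv_mul_cancel₀ hD, sub_add_cancel, mul_inv_cancel_left₀ hD]
        rw [hfac]
        exact ((unit_upper _).mul (unit_diag hX hD)).mul (unit_lower _)
      · rw [isUnit_iff_ne_zero] at hA hΔ
        have hY : D - C * (A⁻¹ * B) ≠ 0 := by
          have h : D - C * (A⁻¹ * B) = C * (C⁻¹ * D - A⁻¹ * B) := by
            rw [mul_sub, mul_inv_cancel_left₀ hC]
          rw [h]
          exact mul_ne_zero hC hΔ
        have hfac : (!![A, B; C, D] : Matrix (Fin 2) (Fin 2) ℍ[ℝ]) =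
            !![1, 0; C * A⁻¹, 1] * !![A, 0; 0, D - C * (A⁻¹ * B)] *
              !![1, A⁻¹ * B; 0, 1] := by
          rw [Matrix.mul_fin_two, Matrix.mul_fin_two]
          simp only [one_mul, mul_one, zero_mul, mul_zero, add_zero, zero_add,
            mul_assoc, inv_mul_cancel₀ hA, mul_inv_cancel_left₀ hA,
            add_sub_cancel]
        rw [hfac]
        exact ((unit_lower _).mul (unit_diag hA hY)).mul (unit_upper _)
    have hstar : (!![star A, star C; star B, star D] : Matrix (Fin 2) (Fin 2) ℍ[ℝ]) =
        star !![A, B; C, D] := by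
      refine Matrix.ext fun i j => ?_
      fin_cases i <;> fin_cases j <;>
        simp [Matrix.conjTranspose_apply]
    rw [hstar]
    exact hM.star
end

section
/- Let S = [[A, B], [C, D]] be a switch with entries in the real quaternions ℍ, and assume CD ≠ DC and AB ≠ BA (the non-commutative case). Then A = 1 − D⁻¹C⁻¹DC and D = 1 − A⁻¹B⁻¹AB; the norm |A| < 2 and the real part Re(A) > 0, and if |A| = 1 then Re(A) = 1/2; likewise |D| < 2, Re(D) > 0, and if |D| = 1 then Re(D) = 1/2; and finally |B|·|C| = 1. -/
open Quaternion

lemma norm_sq_aux (a q : ℍ[ℝ]) (hq : ‖q‖ = 1) (ha : a = 1 - q) :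
    ‖a‖ ^ 2 = 2 * a.re := by
  have h1 : ‖a‖ ^ 2 = Quaternion.normSq a := by
    rw [pow_two, ← Quaternion.normSq_eq_norm_mul_self]
  have h2 : Quaternion.normSq q = 1 := by
    rw [Quaternion.normSq_eq_norm_mul_self, hq]; ring
  rw [h1, ha]
  rw [Quaternion.normSq_def'] at h2 ⊢
  simp only [Quaternion.re_sub, Quaternion.imI_sub, Quaternion.imJ_sub,
    Quaternion.imK_sub, Quaternion.re_one, Quaternion.imI_one,
    Quaternion.imJ_one, Quaternion.imK_one]
  nlinarith [h2]

lemma main_aux (a q : ℍ[ℝ]) (hq : ‖q‖ = 1) (ha : a = 1 - q) (ha0 : a ≠ 0)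
    (ha2 : a ≠ 2) :
    ‖a‖ < 2 ∧ a.re > 0 ∧ (‖a‖ = 1 → a.re = 1 / 2) := by
  have hsq : ‖a‖ ^ 2 = 2 * a.re := norm_sq_aux a q hq ha
  have hnorm : 0 < ‖a‖ := norm_pos_iff.mpr ha0
  have hre : a.re ≤ ‖a‖ := by
    have h1 : ‖a‖ ^ 2 = Quaternion.normSq a := by
      rw [pow_two, ← Quaternion.normSq_eq_norm_mul_self]
    rw [Quaternion.normSq_def'] at h1
    nlinarith [sq_nonneg a.imI, sq_nonneg a.imJ, sq_nonneg a.imK]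
  have hpos : 0 < a.re := by nlinarith
  refine ⟨?_, hpos, fun h1 => by nlinarith⟩
  rcases lt_or_ge ‖a‖ 2 with h | h
  · exact h
  exfalso
  have h2 : ‖a‖ ≤ 2 := by nlinarith
  have he : ‖a‖ = 2 := le_antisymm h2 h
  have hre2 : a.re = 2 := by nlinarith
  have hsq2 : a.re ^ 2 + a.imI ^ 2 + a.imJ ^ 2 + a.imK ^ 2 = 4 := by
    have : Quaternion.normSq a = 4 := by
      rw [Quaternion.normSq_eq_norm_mul_self, he]; norm_num
    rw [Quaternion.normSq_def'] at this; exact this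
  have hI : a.imI = 0 := by nlinarith [sq_nonneg a.imJ, sq_nonneg a.imK]
  have hJ : a.imJ = 0 := by nlinarith [sq_nonneg a.imI, sq_nonneg a.imK]
  have hK : a.imK = 0 := by nlinarith [sq_nonneg a.imI, sq_nonneg a.imJ]
  apply ha2
  have h22 : (2 : ℍ[ℝ]) = ((2 : ℝ) : ℍ[ℝ]) := by norm_cast
  rw [h22]
  ext <;> simp [hre2, hI, hJ, hK]

/-- For a non-commutative switch `[[A,B],[C,D]]` over ℍ (i.e. with
`CD ≠ DC` and `AB ≠ BA`): `A = 1 − D⁻¹C⁻¹DC`, `D = 1 − A⁻¹B⁻¹AB`, `|A| < 2`,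
`Re A > 0`, `|A| = 1 → Re A = 1/2`, likewise for `D`, and `|B| |C| = 1`. -/
theorem stmt_14 (A B C D : ℍ[ℝ]) (h : IsSwitch A B C D)
    (hCD : C * D ≠ D * C) (hAB : A * B ≠ B * A) :
    A = 1 - D⁻¹ * C⁻¹ * D * C ∧
    D = 1 - A⁻¹ * B⁻¹ * A * B ∧
    ‖A‖ < 2 ∧ A.re > 0 ∧ (‖A‖ = 1 → A.re = 1 / 2) ∧
    ‖D‖ < 2 ∧ D.re > 0 ∧ (‖D‖ = 1 → D.re = 1 / 2) ∧
    ‖B‖ * ‖C‖ = 1 := by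
  obtain ⟨-, -, -, e1, e2, e3, -⟩ := h
  have hA : A ≠ 0 := by rintro rfl; simp at hAB
  have hB : B ≠ 0 := by rintro rfl; simp at hAB
  have hC : C ≠ 0 := by rintro rfl; simp at hCD
  have hD : D ≠ 0 := by rintro rfl; simp at hCD
  have hCD0 : C * D ≠ 0 := mul_ne_zero hC hD
  have hBA0 : B * A ≠ 0 := mul_ne_zero hB hA
  have hAq : A = 1 - D⁻¹ * C⁻¹ * D * C := by
    calc A = (C * D)⁻¹ * (C * D * A) := by
          rw [← mul_assoc, inv_mul_cancel₀ hCD0, one_mul]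
      _ = (C * D)⁻¹ * (C * D - D * C) := by rw [← e3]
      _ = 1 - (C * D)⁻¹ * (D * C) := by rw [mul_sub, inv_mul_cancel₀ hCD0]
      _ = 1 - D⁻¹ * C⁻¹ * D * C := by rw [mul_inv_rev, ← mul_assoc]
  have hDq : D = 1 - A⁻¹ * B⁻¹ * A * B := by
    calc D = (B * A)⁻¹ * (B * A * D) := by
          rw [← mul_assoc, inv_mul_cancel₀ hBA0, one_mul]
      _ = (B * A)⁻¹ * (B * A - A * B) := by rw [← e2]
      _ = 1 - (B * A)⁻¹ * (A * B) := by rw [mul_sub, inv_mul_cancel₀ hBA0]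
      _ = 1 - A⁻¹ * B⁻¹ * A * B := by rw [mul_inv_rev, ← mul_assoc]
  have hDn : ‖D‖ ≠ 0 := norm_ne_zero_iff.mpr hD
  have hCn : ‖C‖ ≠ 0 := norm_ne_zero_iff.mpr hC
  have hAn : ‖A‖ ≠ 0 := norm_ne_zero_iff.mpr hA
  have hBn : ‖B‖ ≠ 0 := norm_ne_zero_iff.mpr hB
  have hqn : ‖D⁻¹ * C⁻¹ * D * C‖ = 1 := by
    rw [norm_mul, norm_mul, norm_mul, norm_inv, norm_inv]
    field_simp
  have hpn : ‖A⁻¹ * B⁻¹ * A * B‖ = 1 := by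
    rw [norm_mul, norm_mul, norm_mul, norm_inv, norm_inv]
    field_simp
  have hA2 : A ≠ 2 := by
    rintro rfl
    exact hAB (by rw [two_mul, mul_two])
  have hD2 : D ≠ 2 := by
    rintro rfl
    exact hCD (by rw [two_mul, mul_two])
  obtain ⟨hA1, hA2', hA3⟩ := main_aux A _ hqn hAq hA hA2
  obtain ⟨hD1, hD2', hD3⟩ := main_aux D _ hpn hDq hD hD2
  refine ⟨hAq, hDq, hA1, hA2', hA3, hD1, hD2', hD3, ?_⟩
  have hBAC : B * A * C = A * (1 - A) := by
    have h' : B * A * C = A - A * A := eq_sub_of_add_eq' e1.symm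
    rw [h', mul_sub, mul_one]
  have h1A : ‖(1 : ℍ[ℝ]) - A‖ = 1 := by
    have : (1 : ℍ[ℝ]) - A = D⁻¹ * C⁻¹ * D * C := by rw [hAq, sub_sub_cancel]
    rw [this, hqn]
  have hn := congrArg norm hBAC
  rw [norm_mul, norm_mul, norm_mul, h1A, mul_one] at hn
  have h2 : ‖B‖ * ‖C‖ * ‖A‖ = ‖A‖ := by
    calc ‖B‖ * ‖C‖ * ‖A‖ = ‖B‖ * ‖A‖ * ‖C‖ := by ring
    _ = ‖A‖ := hn
  field_simp at h2
  tauto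
end

section
/- Let S = [[A, B], [C, D]] be a switch with entries in the real quaternions ℍ such that each of A, B, C, D has all four real coordinates in ℤ (i.e., entries lie in the ring of Lipschitz integer quaternions a + bi + cj + dk with a, b, c, d ∈ ℤ), and assume CD ≠ DC and AB ≠ BA. Then S is of Budapest type: there exist U, V ∈ {±i, ±j, ±k} with UV = −VU such that A = D = 1 + U, B = −V, and C = V. -/
open Quaternion

/-- The quaternion `k`. -/
noncomputable def qk : ℍ[ℝ] := ⟨0, 0, 0, 1⟩

/-- `Q` is a Lipschitz integer quaternion: all four real coordinates lie in ℤ. -/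
def IsLipschitz (Q : ℍ[ℝ]) : Prop :=
  ∃ a b c d : ℤ, Q = ⟨(a : ℝ), (b : ℝ), (c : ℝ), (d : ℝ)⟩

/- ### Auxiliary lemmas -/

lemma qi_re : qi.re = 0 := rfl
lemma qi_imI : qi.imI = 1 := rfl
lemma qi_imJ : qi.imJ = 0 := rfl
lemma qi_imK : qi.imK = 0 := rfl
lemma qj_re : qj.re = 0 := rfl
lemma qj_imI : qj.imI = 0 := rfl
lemma qj_imJ : qj.imJ = 1 := rfl
lemma qj_imK : qj.imK = 0 := rfl
lemma qk_re : qk.re = 0 := rfl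
lemma qk_imI : qk.imI = 0 := rfl
lemma qk_imJ : qk.imJ = 0 := rfl
lemma qk_imK : qk.imK = 1 := rfl

lemma lip_normSq' (Q : ℍ[ℝ]) (h : IsLipschitz Q) : ∃ n : ℤ, 0 ≤ n ∧ normSq Q = (n:ℝ) := by
  obtain ⟨a,b,c,d,rfl⟩ := h
  refine ⟨a^2+b^2+c^2+d^2, by positivity, ?_⟩
  erw [normSq_def']; push_cast; ring

lemma lip_sub_one' (Q : ℍ[ℝ]) (h : IsLipschitz Q) : IsLipschitz (Q - 1) := by
  obtain ⟨a,b,c,d,rfl⟩ := h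
  refine ⟨a-1,b,c,d, ?_⟩
  push_cast
  ext
  · rfl
  · exact sub_zero (b:ℝ)
  · exact sub_zero (c:ℝ)
  · exact sub_zero (d:ℝ)

lemma lip_class' (Q : ℍ[ℝ]) (hQ : IsLipschitz Q) (h1 : normSq Q = 1) :
    Q = 1 ∨ Q = -1 ∨ Q = qi ∨ Q = -qi ∨ Q = qj ∨ Q = -qj ∨ Q = qk ∨ Q = -qk := by
  obtain ⟨a,b,c,d,rfl⟩ := hQ
  erw [normSq_def'] at h1
  have hz : a^2+b^2+c^2+d^2 = 1 := by
    have h1' : (a:ℝ)^2+(b:ℝ)^2+(c:ℝ)^2+(d:ℝ)^2 = 1 := h1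
    exact_mod_cast h1'
  have ha : -1 ≤ a ∧ a ≤ 1 := by constructor <;> nlinarith [sq_nonneg a, sq_nonneg b, sq_nonneg c, sq_nonneg d, sq_nonneg (a-1), sq_nonneg (a+1)]
  have hb : -1 ≤ b ∧ b ≤ 1 := by constructor <;> nlinarith [sq_nonneg a, sq_nonneg b, sq_nonneg c, sq_nonneg d, sq_nonneg (b-1), sq_nonneg (b+1)]
  have hc : -1 ≤ c ∧ c ≤ 1 := by constructor <;> nlinarith [sq_nonneg a, sq_nonneg b, sq_nonneg c, sq_nonneg d, sq_nonneg (c-1), sq_nonneg (c+1)]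
  have hd : -1 ≤ d ∧ d ≤ 1 := by constructor <;> nlinarith [sq_nonneg a, sq_nonneg b, sq_nonneg c, sq_nonneg d, sq_nonneg (d-1), sq_nonneg (d+1)]
  obtain ⟨ha1, ha2⟩ := ha; obtain ⟨hb1, hb2⟩ := hb
  obtain ⟨hc1, hc2⟩ := hc; obtain ⟨hd1, hd2⟩ := hd
  have h8 : (a=1∧b=0∧c=0∧d=0) ∨ (a=-1∧b=0∧c=0∧d=0) ∨ (a=0∧b=1∧c=0∧d=0) ∨
      (a=0∧b=-1∧c=0∧d=0) ∨ (a=0∧b=0∧c=1∧d=0) ∨ (a=0∧b=0∧c=-1∧d=0) ∨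
      (a=0∧b=0∧c=0∧d=1) ∨ (a=0∧b=0∧c=0∧d=-1) := by
    clear h1
    interval_cases a <;> interval_cases b <;> interval_cases c <;> interval_cases d <;>
      revert hz <;> decide
  rcases h8 with ⟨rfl,rfl,rfl,rfl⟩|⟨rfl,rfl,rfl,rfl⟩|⟨rfl,rfl,rfl,rfl⟩|⟨rfl,rfl,rfl,rfl⟩|⟨rfl,rfl,rfl,rfl⟩|⟨rfl,rfl,rfl,rfl⟩|⟨rfl,rfl,rfl,rfl⟩|⟨rfl,rfl,rfl,rfl⟩
  · exact Or.inl (by push_cast; ext <;> simp [qi_re, qi_imI, qi_imJ, qi_imK, qj_re, qj_imI, qj_imJ, qj_imK, qk_re, qk_imI, qk_imJ, qk_imK])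
  · exact Or.inr (Or.inl (by push_cast; ext <;> simp [qi_re, qi_imI, qi_imJ, qi_imK, qj_re, qj_imI, qj_imJ, qj_imK, qk_re, qk_imI, qk_imJ, qk_imK]))
  · exact Or.inr (Or.inr (Or.inl (by push_cast; ext <;> simp [qi_re, qi_imI, qi_imJ, qi_imK, qj_re, qj_imI, qj_imJ, qj_imK, qk_re, qk_imI, qk_imJ, qk_imK])))
  · exact Or.inr (Or.inr (Or.inr (Or.inl (by push_cast; ext <;> simp [qi_re, qi_imI, qi_imJ, qi_imK, qj_re, qj_imI, qj_imJ, qj_imK, qk_re, qk_imI, qk_imJ, qk_imK]))))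
  · exact Or.inr (Or.inr (Or.inr (Or.inr (Or.inl (by push_cast; ext <;> simp [qi_re, qi_imI, qi_imJ, qi_imK, qj_re, qj_imI, qj_imJ, qj_imK, qk_re, qk_imI, qk_imJ, qk_imK])))))
  · exact Or.inr (Or.inr (Or.inr (Or.inr (Or.inr (Or.inl (by push_cast; ext <;> simp [qi_re, qi_imI, qi_imJ, qi_imK, qj_re, qj_imI, qj_imJ, qj_imK, qk_re, qk_imI, qk_imJ, qk_imK]))))))
  · exact Or.inr (Or.inr (Or.inr (Or.inr (Or.inr (Or.inr (Or.inl (by push_cast; ext <;> simp [qi_re, qi_imI, qi_imJ, qi_imK, qj_re, qj_imI, qj_imJ, qj_imK, qk_re, qk_imI, qk_imJ, qk_imK])))))))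
  · exact Or.inr (Or.inr (Or.inr (Or.inr (Or.inr (Or.inr (Or.inr (by push_cast; ext <;> simp [qi_re, qi_imI, qi_imJ, qi_imK, qj_re, qj_imI, qj_imJ, qj_imK, qk_re, qk_imI, qk_imJ, qk_imK])))))))

lemma six_sq' (X : ℍ[ℝ]) (h : X = qi ∨ X = -qi ∨ X = qj ∨ X = -qj ∨ X = qk ∨ X = -qk) :
    X * X = -1 := by
  rcases h with rfl|rfl|rfl|rfl|rfl|rfl <;>
    norm_num [qi_re, qi_imI, qi_imJ, qi_imK, qj_re, qj_imI, qj_imJ, qj_imK, qk_re, qk_imI, qk_imJ, qk_imK, Quaternion.ext_iff]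

lemma six_one_add' (X : ℍ[ℝ]) (h : X = qi ∨ X = -qi ∨ X = qj ∨ X = -qj ∨ X = qk ∨ X = -qk) :
    (1 : ℍ[ℝ]) + X ≠ 0 := by
  rcases h with rfl|rfl|rfl|rfl|rfl|rfl <;>
    norm_num [qi_re, qi_imI, qi_imJ, qi_imK, qj_re, qj_imI, qj_imJ, qj_imK, qk_re, qk_imI, qk_imJ, qk_imK, Quaternion.ext_iff]

lemma six_one_sub' (X : ℍ[ℝ]) (h : X = qi ∨ X = -qi ∨ X = qj ∨ X = -qj ∨ X = qk ∨ X = -qk) :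
    (1 : ℍ[ℝ]) - X ≠ 0 := by
  rcases h with rfl|rfl|rfl|rfl|rfl|rfl <;>
    norm_num [qi_re, qi_imI, qi_imJ, qi_imK, qj_re, qj_imI, qj_imJ, qj_imK, qk_re, qk_imI, qk_imJ, qk_imK, Quaternion.ext_iff]

lemma six_comm' (X Y : ℍ[ℝ]) (hX : X = qi ∨ X = -qi ∨ X = qj ∨ X = -qj ∨ X = qk ∨ X = -qk)
    (hY : Y = qi ∨ Y = -qi ∨ Y = qj ∨ Y = -qj ∨ Y = qk ∨ Y = -qk) :
    X * Y = Y * X ∨ X * Y = -(Y * X) := by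
  rcases hX with rfl|rfl|rfl|rfl|rfl|rfl <;> rcases hY with rfl|rfl|rfl|rfl|rfl|rfl <;>
    first
    | (left; norm_num [qi_re, qi_imI, qi_imJ, qi_imK, qj_re, qj_imI, qj_imJ, qj_imK, qk_re, qk_imI, qk_imJ, qk_imK, Quaternion.ext_iff]; done)
    | (right; norm_num [qi_re, qi_imI, qi_imJ, qi_imK, qj_re, qj_imI, qj_imJ, qj_imK, qk_re, qk_imI, qk_imJ, qk_imK, Quaternion.ext_iff]; done)

lemma two_ne_zero_H : (2:ℍ[ℝ]) ≠ 0 := by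
  intro h
  have h2 : ((2:ℍ[ℝ])).re = (0:ℍ[ℝ]).re := congrArg _ h
  have e1 : ((2:ℍ[ℝ])).re = 2 := rfl
  have e2 : ((0:ℍ[ℝ])).re = 0 := rfl
  rw [e1, e2] at h2
  norm_num at h2

/-- Every non-commutative switch over ℍ whose entries are Lipschitz
integer quaternions is of Budapest type: there are `U, V ∈ {±i, ±j, ±k}` with
`UV = −VU` such that `A = D = 1 + U`, `B = −V` and `C = V`. -/
theorem stmt_15 (A B C D : ℍ[ℝ]) (h : IsSwitch A B C D)
    (hA : IsLipschitz A) (hB : IsLipschitz B) (hC : IsLipschitz C) (hD : IsLipschitz D)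
    (hCD : C * D ≠ D * C) (hAB : A * B ≠ B * A) :
    ∃ U V : ℍ[ℝ],
      (U = qi ∨ U = -qi ∨ U = qj ∨ U = -qj ∨ U = qk ∨ U = -qk) ∧
      (V = qi ∨ V = -qi ∨ V = qj ∨ V = -qj ∨ V = qk ∨ V = -qk) ∧
      U * V = -(V * U) ∧
      A = 1 + U ∧ D = 1 + U ∧ B = -V ∧ C = V := by
  obtain ⟨hBu, hCu, -, e1, e2, e3, e4⟩ := h
  have hB0 : B ≠ 0 := hBu.ne_zero
  have hC0 : C ≠ 0 := hCu.ne_zero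
  have hA0 : A ≠ 0 := by
    intro h0
    exact hAB (by rw [h0, zero_mul, mul_zero])
  have hD0 : D ≠ 0 := by
    intro h0
    exact hCD (by rw [h0, zero_mul, mul_zero])
  have hnA : normSq A ≠ 0 := normSq_ne_zero.2 hA0
  have hnB : normSq B ≠ 0 := normSq_ne_zero.2 hB0
  have hnC : normSq C ≠ 0 := normSq_ne_zero.2 hC0
  have hnD : normSq D ≠ 0 := normSq_ne_zero.2 hD0
  -- normSq (A - 1) = 1
  have k3 : C * (D * (A - 1)) = -(D * C) := by
    linear_combination (norm := noncomm_ring) -e3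
  have n3 : normSq (A - 1) = 1 := by
    have hq := congrArg normSq k3
    simp only [map_mul, normSq_neg] at hq
    -- hq : normSq C * (normSq D * normSq (A-1)) = normSq D * normSq C
    have hq' : (normSq C * normSq D) * normSq (A - 1) = (normSq C * normSq D) * 1 := by
      linear_combination hq
    exact mul_left_cancel₀ (mul_ne_zero hnC hnD) hq'
  -- normSq B * normSq C = 1
  have k1 : A * ((1:ℍ[ℝ]) - A) = B * (A * C) := by
    linear_combination (norm := noncomm_ring) e1
  have n1 : normSq B * normSq C = 1 := by
    have hq := congrArg normSq k1
    simp only [map_mul] at hq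
    have h1A : normSq ((1:ℍ[ℝ]) - A) = 1 := by
      rw [show (1:ℍ[ℝ]) - A = -(A - 1) from (neg_sub A 1).symm, normSq_neg]
      exact n3
    rw [h1A] at hq
    have hq' : normSq A * (normSq B * normSq C) = normSq A * 1 := by
      linear_combination -hq
    exact (mul_left_cancel₀ hnA hq')
  -- integrality: normSq B = 1 and normSq C = 1
  obtain ⟨m, hm0, hm⟩ := lip_normSq' B hB
  obtain ⟨n, hn0, hn⟩ := lip_normSq' C hC
  have hmn : m * n = 1 := by
    have : ((m * n : ℤ) : ℝ) = 1 := by push_cast; rw [← hm, ← hn]; exact n1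
    exact_mod_cast this
  have hm1 : normSq B = 1 := by
    rw [hm, Int.eq_one_of_mul_eq_one_right hm0 hmn]; norm_num
  have hn1 : normSq C = 1 := by
    rw [hn, Int.eq_one_of_mul_eq_one_right hn0 (by rw [mul_comm] at hmn; exact hmn)]; norm_num
  -- classify B
  have hB8 := lip_class' B hB hm1
  have hB6 : B = qi ∨ B = -qi ∨ B = qj ∨ B = -qj ∨ B = qk ∨ B = -qk := by
    rcases hB8 with rfl|rfl|h'|h'|h'|h'|h'|h'
    · exact absurd (by rw [mul_one, one_mul]) hAB
    · exact absurd (by rw [mul_neg, mul_one, neg_mul, one_mul]) hAB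
    · exact Or.inl h'
    · exact Or.inr (Or.inl h')
    · exact Or.inr (Or.inr (Or.inl h'))
    · exact Or.inr (Or.inr (Or.inr (Or.inl h')))
    · exact Or.inr (Or.inr (Or.inr (Or.inr (Or.inl h'))))
    · exact Or.inr (Or.inr (Or.inr (Or.inr (Or.inr h'))))
  -- classify C
  have hC8 := lip_class' C hC hn1
  have hC6 : C = qi ∨ C = -qi ∨ C = qj ∨ C = -qj ∨ C = qk ∨ C = -qk := by
    rcases hC8 with rfl|rfl|h'|h'|h'|h'|h'|h'
    · exact absurd (by rw [mul_one, one_mul]) hCD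
    · exact absurd (by rw [mul_neg, mul_one, neg_mul, one_mul]) hCD
    · exact Or.inl h'
    · exact Or.inr (Or.inl h')
    · exact Or.inr (Or.inr (Or.inl h'))
    · exact Or.inr (Or.inr (Or.inr (Or.inl h')))
    · exact Or.inr (Or.inr (Or.inr (Or.inr (Or.inl h'))))
    · exact Or.inr (Or.inr (Or.inr (Or.inr (Or.inr h'))))
  -- classify U := A - 1
  have hU8 := lip_class' (A - 1) (lip_sub_one' A hA) n3
  have hU6 : A - 1 = qi ∨ A - 1 = -qi ∨ A - 1 = qj ∨ A - 1 = -qj ∨ A - 1 = qk ∨ A - 1 = -qk := by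
    rcases hU8 with h'|h'|h'|h'|h'|h'|h'|h'
    · -- A = 2, central, contradicts hAB
      exfalso
      have hA2 : A = 1 + 1 := by linear_combination (norm := noncomm_ring) h'
      exact hAB (by rw [hA2]; noncomm_ring)
    · -- A = 0
      exfalso
      exact hA0 (by linear_combination (norm := noncomm_ring) h')
    · exact Or.inl h'
    · exact Or.inr (Or.inl h')
    · exact Or.inr (Or.inr (Or.inl h'))
    · exact Or.inr (Or.inr (Or.inr (Or.inl h')))
    · exact Or.inr (Or.inr (Or.inr (Or.inr (Or.inl h'))))
    · exact Or.inr (Or.inr (Or.inr (Or.inr (Or.inr h'))))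
  set u : ℍ[ℝ] := A - 1 with hu
  have hA1 : A = 1 + u := by rw [hu]; abel
  have hu2 : u * u = -1 := six_sq' u hU6
  have h1pu : (1:ℍ[ℝ]) + u ≠ 0 := six_one_add' u hU6
  have h1mu : (1:ℍ[ℝ]) - u ≠ 0 := six_one_sub' u hU6
  -- B anticommutes with u
  have hbu : B * u = -(u * B) := by
    rcases six_comm' B u hB6 hU6 with hcomm | hanti
    · exfalso
      apply hAB
      rw [hA1]
      linear_combination (norm := noncomm_ring) -hcomm
    · exact hanti
  -- D = 1 + u
  have hDu : D = 1 + u := by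
    rw [hA1] at e2
    have hbd : B * ((1+u) * D) = B * (u + u) := by
      linear_combination (norm := noncomm_ring) -e2 - hbu
    have hd2 : (1+u) * D = u + u := mul_left_cancel₀ hB0 hbd
    have h2D : (2:ℍ[ℝ]) * D = 2 * (1 + u) := by
      linear_combination (norm := noncomm_ring) (1-u) * hd2 + hu2 * D - 2 * hu2
    exact mul_left_cancel₀ two_ne_zero_H h2D
  -- B * C = 1, hence B = -C
  have hBC : B * C = 1 := by
    rw [hA1] at e1
    have k1' : (1-u) * (B * C) = (1-u) * 1 := by
      linear_combination (norm := noncomm_ring) -e1 - hu2 - hbu * C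
    exact mul_left_cancel₀ h1mu k1'
  have hbb : B * B = -1 := six_sq' B hB6
  have hBmC : B = -C := by
    linear_combination (norm := noncomm_ring) -(B * hBC) + hbb * C
  -- anticommutation of u and C
  have huC : u * C = -(C * u) := by
    rw [hBmC] at hbu
    linear_combination (norm := noncomm_ring) -hbu
  exact ⟨u, C, hU6, hC6, huC, hA1, hDu, hBmC, rfl⟩
end

section
/- Let S = [[A, B], [C, D]] be a switch over a nontrivial associative unital ring R, set λ = B⁻¹(1 − A), and let n ≥ 2. Define the column vector z = (1, λ, λ², …, λ^{n−1})ᵀ ∈ Rⁿ, and for 1 ≤ i ≤ n−1 let S_i be the n×n matrix over R equal to the identity except that its 2×2 submatrix in rows and columns i, i+1 is S. Then z ≠ 0 and S_i z = z for every 1 ≤ i ≤ n−1; in particular the representation of the braid group sending the i-th generator to S_i has a common nonzero fixed vector and is reducible. -/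
/-- The `n×n` matrix over `R` which is the identity except that its 2×2 submatrix
in rows and columns `i, i+1` (0-based) is `[[A, B], [C, D]]`. -/
def blockAt {R : Type*} [Ring R] (n : ℕ) (i : ℕ) (A B C D : R) :
    Matrix (Fin n) (Fin n) R := fun p q =>
  if (p : ℕ) = i ∧ (q : ℕ) = i then A
  else if (p : ℕ) = i ∧ (q : ℕ) = i + 1 then B
  else if (p : ℕ) = i + 1 ∧ (q : ℕ) = i then C
  else if (p : ℕ) = i + 1 ∧ (q : ℕ) = i + 1 then D
  else if p = q then 1 else 0

/-- Key algebraic fact about switches: `C = (1 - D) B⁻¹ (1 - A)`. -/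
theorem switch_C_eq {R : Type*} [Ring R] {A B C D : R} (h : IsSwitch A B C D) :
    C = (1 - D) * Ring.inverse B * (1 - A) := by
  obtain ⟨hB, -, hDis, h1, h2, h3, h4⟩ := h
  set b := Ring.inverse B with hbdef
  have hb1 : B * b = 1 := Ring.mul_inverse_cancel B hB
  have hb2 : b * B = 1 := Ring.inverse_mul_cancel B hB
  have e1 : B * A * C = A - A * A := eq_sub_of_add_eq' h1.symm
  have e4 : C * D * B = D - D * D := eq_sub_of_add_eq' h4.symm
  have e2 : A * B = B * A * (1 - D) := by
    rw [mul_sub, mul_one, ← h2]; noncomm_ring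
  have e3 : D * C = C * D * (1 - A) := by
    rw [mul_sub, mul_one, ← h3]; noncomm_ring
  rcases hDis with ⟨hD, -⟩ | ⟨hA, -⟩
  · -- case: `D` is a unit
    set d := Ring.inverse D with hddef
    have hd1 : D * d = 1 := Ring.mul_inverse_cancel D hD
    have hd2 : d * D = 1 := Ring.inverse_mul_cancel D hD
    have hC1 : C = (D - D * D) * (b * d) := by
      calc C = C * 1 := (mul_one C).symm
        _ = C * (D * d) := by rw [hd1]
        _ = C * (D * ((B * b) * d)) := by rw [hb1, one_mul]
        _ = (C * D * B) * (b * d) := by noncomm_ring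
        _ = (D - D * D) * (b * d) := by rw [e4]
    calc C = (d * D) * C := by rw [hd2, one_mul]
      _ = d * (D * C) := by rw [mul_assoc]
      _ = d * (C * D * (1 - A)) := by rw [e3]
      _ = d * ((D - D * D) * (b * d) * D * (1 - A)) := by rw [← hC1]
      _ = (d * D - (d * D) * D) * (b * (d * D)) * (1 - A) := by noncomm_ring
      _ = (1 - D) * b * (1 - A) := by rw [hd2]; noncomm_ring
  · -- case: `A` is a unit
    set a := Ring.inverse A with hadef
    have ha1 : A * a = 1 := Ring.mul_inverse_cancel A hA
    have ha2 : a * A = 1 := Ring.inverse_mul_cancel A hA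
    have hC1 : C = a * (b * (A - A * A)) := by
      calc C = (a * (b * B) * A) * C := by rw [hb2, mul_one, ha2, one_mul]
        _ = a * (b * (B * A * C)) := by noncomm_ring
        _ = a * (b * (A - A * A)) := by rw [e1]
    have hD' : (1 : R) - D = a * (b * (A * B)) := by
      calc (1 : R) - D = a * (b * B) * A * (1 - D) := by
            rw [hb2, mul_one, ha2, one_mul]
        _ = a * (b * (B * A * (1 - D))) := by noncomm_ring
        _ = a * (b * (A * B)) := by rw [← e2]
    calc C = a * (b * (A - A * A)) := hC1
      _ = a * (b * (A * (B * b) * (1 - A))) := by rw [hb1]; noncomm_ring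
      _ = a * (b * (A * B)) * b * (1 - A) := by noncomm_ring
      _ = (1 - D) * b * (1 - A) := by rw [← hD']

/-- For a switch `[[A,B],[C,D]]` over a nontrivial associative unital
ring and `λ = B⁻¹(1 − A)`, the vector `z = (1, λ, λ², …, λ^{n−1})ᵀ` is nonzero and
is fixed by every matrix `Sᵢ` (identity with 2×2 block `S` at rows/columns `i, i+1`);
hence the braid group representation `σᵢ ↦ Sᵢ` has a common nonzero fixed vector
and is reducible. -/
theorem stmt_17 {R : Type*} [Ring R] [Nontrivial R] (A B C D : R)
    (h : IsSwitch A B C D) (n : ℕ) (hn : 2 ≤ n)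
    (z : Fin n → R) (hz : z = fun p : Fin n => (Ring.inverse B * (1 - A)) ^ (p : ℕ)) :
    z ≠ 0 ∧ ∀ i : ℕ, i + 1 < n → (blockAt n i A B C D).mulVec z = z := by
  set L : R := Ring.inverse B * (1 - A) with hL
  obtain ⟨hB, hCu, hDis, h1, h2, h3, h4⟩ := h
  have hb1 : B * Ring.inverse B = 1 := Ring.mul_inverse_cancel B hB
  have fB : B * L = 1 - A := by rw [hL, ← mul_assoc, hb1, one_mul]
  have key : C = (1 - D) * L := by
    rw [hL, ← mul_assoc]
    exact switch_C_eq ⟨hB, hCu, hDis, h1, h2, h3, h4⟩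
  have fCD : C + D * L = L := by rw [key]; noncomm_ring
  constructor
  · intro h0
    have h00 : z ⟨0, by omega⟩ = 0 := by rw [h0]; rfl
    rw [hz] at h00
    simp only [pow_zero] at h00
    exact one_ne_zero h00
  · intro i hi
    have hi0 : i < n := by omega
    set idx : Fin n := ⟨i, hi0⟩ with hidx
    set idx' : Fin n := ⟨i + 1, hi⟩ with hidx'
    have hne : idx ≠ idx' := by
      simp [hidx, hidx', Fin.ext_iff]
    funext p
    show ∑ q, blockAt n i A B C D p q * z q = z p
    by_cases hp : (p : ℕ) = i
    · -- row `i`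
      have hpi : p = idx := by simp [hidx, Fin.ext_iff, hp]
      have hterm : ∀ q : Fin n, blockAt n i A B C D p q * z q =
          (if q = idx then A * z idx else 0) + (if q = idx' then B * z idx' else 0) := by
        intro q
        by_cases hq : q = idx
        · subst hq
          simp [blockAt, hp, hidx, hidx', hne, hne.symm]
        · by_cases hq' : q = idx'
          · subst hq'
            simp [blockAt, hp, hidx', hidx, hne, hne.symm]
          · have hq1 : (q : ℕ) ≠ i := fun hc => hq (by simp [hidx, Fin.ext_iff, hc])
            have hq2 : (q : ℕ) ≠ i + 1 := fun hc => hq' (by simp [hidx', Fin.ext_iff, hc])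
            have hpq : p ≠ q := fun hc => hq1 (by rw [← hc, hp])
            simp [blockAt, hq1, hq2, hpq, hq, hq']
      rw [Finset.sum_congr rfl fun q _ => hterm q, Finset.sum_add_distrib]
      rw [Finset.sum_ite_eq' Finset.univ idx (fun _ => A * z idx)]
      rw [Finset.sum_ite_eq' Finset.univ idx' (fun _ => B * z idx')]
      simp only [Finset.mem_univ, if_true]
      rw [hz, hpi]
      show A * L ^ ((idx : Fin n) : ℕ) + B * L ^ ((idx' : Fin n) : ℕ) = L ^ ((idx : Fin n) : ℕ)
      simp only [hidx, hidx']
      calc A * L ^ i + B * L ^ (i + 1)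
          = A * L ^ i + (B * L) * L ^ i := by rw [pow_succ']; noncomm_ring
        _ = A * L ^ i + (1 - A) * L ^ i := by rw [fB]
        _ = L ^ i := by noncomm_ring
    · by_cases hp' : (p : ℕ) = i + 1
      · -- row `i+1`
        have hpi : p = idx' := by simp [hidx', Fin.ext_iff, hp']
        have hii : i ≠ i + 1 := by omega
        have hterm : ∀ q : Fin n, blockAt n i A B C D p q * z q =
            (if q = idx then C * z idx else 0) + (if q = idx' then D * z idx' else 0) := by
          intro q
          by_cases hq : q = idx
          · subst hq
            simp [blockAt, hp, hp', hidx, hidx', hne, hne.symm, hii]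
          · by_cases hq' : q = idx'
            · subst hq'
              simp [blockAt, hp, hp', hidx', hidx, hne, hne.symm, hii]
            · have hq1 : (q : ℕ) ≠ i := fun hc => hq (by simp [hidx, Fin.ext_iff, hc])
              have hq2 : (q : ℕ) ≠ i + 1 := fun hc => hq' (by simp [hidx', Fin.ext_iff, hc])
              have hpq : p ≠ q := fun hc => hq2 (by rw [← hc, hp'])
              simp [blockAt, hq1, hq2, hpq, hq, hq', hp]
        rw [Finset.sum_congr rfl fun q _ => hterm q, Finset.sum_add_distrib]
        rw [Finset.sum_ite_eq' Finset.univ idx (fun _ => C * z idx)]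
        rw [Finset.sum_ite_eq' Finset.univ idx' (fun _ => D * z idx')]
        simp only [Finset.mem_univ, if_true]
        rw [hz, hpi]
        show C * L ^ ((idx : Fin n) : ℕ) + D * L ^ ((idx' : Fin n) : ℕ)
            = L ^ ((idx' : Fin n) : ℕ)
        simp only [hidx, hidx']
        calc C * L ^ i + D * L ^ (i + 1)
            = (C + D * L) * L ^ i := by rw [pow_succ']; noncomm_ring
          _ = L * L ^ i := by rw [fCD]
          _ = L ^ (i + 1) := (pow_succ' L i).symm
      · -- other rows
        have hterm : ∀ q : Fin n, blockAt n i A B C D p q * z q =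
            if q = p then z p else 0 := by
          intro q
          by_cases hq : q = p
          · subst hq
            simp [blockAt, hp, hp']
          · have hpq : p ≠ q := fun hc => hq hc.symm
            by_cases hq1 : (q : ℕ) = i <;> by_cases hq2 : (q : ℕ) = i + 1 <;>
              simp [blockAt, hp, hp', hpq, hq, hq1, hq2]
        rw [Finset.sum_congr rfl fun q _ => hterm q]
        rw [Finset.sum_ite_eq' Finset.univ p (fun _ => z p)]
        simp
end
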